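/- arXiv:2406.19748 — 10 statements merged into one kernel-verified Lean document; each statement's English description precedes it below -/
import Mathlib

section
/- Let L/K be a field extension. Then the following are equivalent: (ii) for every positive integer N there exists an element α ∈ L such that the degree [K(α):K] of the intermediate field K(α) over K is at least N (or infinite); (iii) L/K is strictly infinite. -/
/-!
An essentially finite extension has a finite subextension `M` and an exponent `n > 0` with
`x ^ n ∈ M` for all `x : L` (`M = L`, `n = 1` in characteristic `0`; `M = K(L^{p^r})`,
`n = p^r` in characteristic `p`), so `[K(x):K] ≤ [M(x):K] ≤ n [M:K]`.

Conversely, suppose `[K(x):K] ≤ N` for all `x`. By the primitive element theorem every finite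
subextension of the separable closure `Kˢ` of `K` in `L` is simple, hence of degree `≤ N`, so
`Kˢ/K` is finite. In characteristic `0` this is `L`. In characteristic `p`, the minimal
polynomial of `x` is `g(X^{p^m})` with `g` separable, so `x^{p^m}` is separable and
`p^m ≤ [K(x):K] ≤ N < p^N`; thus `K(L^{p^N}) ⊆ Kˢ` is finite.
-/

/-- A field extension `L/K` is *essentially finite* if either `char K = 0` and `L/K` is
finite, or `char K = p > 0`, `L/K` is algebraic, and there exists `r : ℕ` such that the
intermediate field `L^{p^r}K` generated over `K` by the `p^r`-th powers of all elements of `L`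
is finite over `K`. -/
def EssentiallyFinite (K L : Type*) [Field K] [Field L] [Algebra K L] : Prop :=
  (CharP K 0 ∧ FiniteDimensional K L) ∨
    ∃ p : ℕ, p.Prime ∧ CharP K p ∧ Algebra.IsAlgebraic K L ∧
      ∃ r : ℕ, FiniteDimensional K
        (IntermediateField.adjoin K (Set.range fun y : L => y ^ p ^ r))

open IntermediateField Module Polynomial

section

variable {K L : Type*} [Field K] [Field L] [Algebra K L]

theorem EssentiallyFinite.exists_pow_mem (h : EssentiallyFinite K L) :
    ∃ n ≠ 0, ∃ M : IntermediateField K L, FiniteDimensional K M ∧ ∀ x : L, x ^ n ∈ M := by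
  rcases h with ⟨-, hfin⟩ | ⟨p, hp, -, -, r, hfin⟩
  · exact ⟨1, one_ne_zero, ⊤, topEquiv.symm.toLinearEquiv.finiteDimensional, fun _ => trivial⟩
  · exact ⟨p ^ r, pow_ne_zero r hp.ne_zero, _, hfin, fun x => subset_adjoin K _ ⟨x, rfl⟩⟩

theorem rank_adjoin_simple_le_of_pow_mem {M : IntermediateField K L} [FiniteDimensional K M]
    {n : ℕ} (hn : n ≠ 0) {x : L} (hx : x ^ n ∈ M) :
    Module.rank K K⟮x⟯ ≤ (n * finrank K M : ℕ) := by
  set f : M[X] := X ^ n - C ⟨x ^ n, hx⟩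
  have hf : f.Monic := monic_X_pow_sub_C _ hn
  have hfx : aeval x f = 0 := by simp [f]
  have hint : IsIntegral M x := ⟨f, hf, hfx⟩
  have hdeg : finrank M M⟮x⟯ ≤ n := by
    rw [adjoin.finrank hint, ← natDegree_X_pow_sub_C (n := n) (r := (⟨x ^ n, hx⟩ : M))]
    exact natDegree_le_of_dvd (minpoly.dvd M x hfx) hf.ne_zero
  have : FiniteDimensional M M⟮x⟯ := adjoin.finiteDimensional hint
  have : Module.Free M M⟮x⟯ := Module.Free.of_divisionRing _ _
  have : FiniteDimensional K (M⟮x⟯.restrictScalars K) := FiniteDimensional.trans K M M⟮x⟯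
  have hle : K⟮x⟯ ≤ M⟮x⟯.restrictScalars K :=
    adjoin_simple_le_iff.2 (mem_adjoin_simple_self M x)
  calc Module.rank K K⟮x⟯ ≤ Module.rank K (M⟮x⟯.restrictScalars K) :=
        LinearMap.rank_le_of_injective (inclusion hle).toLinearMap (inclusion_injective hle)
    _ = (finrank K M * finrank M M⟮x⟯ : ℕ) := by
        rw [finrank_mul_finrank K M M⟮x⟯]; exact (finrank_eq_rank _ _).symm
    _ ≤ (n * finrank K M : ℕ) := by
        rw [mul_comm n]; exact_mod_cast Nat.mul_le_mul_left _ hdeg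

theorem isIntegral_and_natDegree_minpoly_lt_of_rank_adjoin_simple_lt {x : L} {N : ℕ}
    (h : Module.rank K K⟮x⟯ < N) : IsIntegral K x ∧ (minpoly K x).natDegree < N := by
  have : FiniteDimensional K K⟮x⟯ := rank_lt_aleph0_iff.1 (h.trans Cardinal.natCast_lt_aleph0)
  have hx : IsIntegral K x := isIntegral_iff.1 (IsIntegral.of_finite K (AdjoinSimple.gen K x))
  refine ⟨hx, ?_⟩
  rwa [← adjoin.finrank hx, ← Nat.cast_lt (α := Cardinal), finrank_eq_rank]

theorem finiteDimensional_of_isSeparable_of_natDegree_minpoly_le [Algebra.IsSeparable K L]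
    {n : ℕ} (h : ∀ x : L, (minpoly K x).natDegree ≤ n) : FiniteDimensional K L := by
  by_contra hinf
  obtain ⟨F, hF, hnF⟩ := exists_lt_finrank_of_infinite_dimensional hinf n
  obtain ⟨γ, hγ⟩ := Field.exists_primitive_element K F
  rw [← (Field.primitive_element_iff_minpoly_natDegree_eq K γ).1 hγ, minpoly_eq] at hnF
  exact (h γ).not_gt hnF

theorem isSeparable_pow_of_natDegree_minpoly_le {p : ℕ} (hp : p.Prime) [CharP K p] {y : L}
    (hy : IsIntegral K y) {r : ℕ} (hdeg : (minpoly K y).natDegree ≤ p ^ r) :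
    IsSeparable K (y ^ p ^ r) := by
  have : ExpChar K p := .prime hp
  obtain ⟨g, hg, m, hgy⟩ := (minpoly.irreducible hy).hasSeparableContraction p
  have hsep : IsSeparable K (y ^ p ^ m) :=
    hg.of_dvd (minpoly.dvd K _ (by rw [← expand_aeval, hgy, minpoly.aeval]))
  have hdvd : p ^ m ∣ (minpoly K y).natDegree :=
    ⟨g.natDegree, by rw [← hgy, natDegree_expand, mul_comm]⟩
  have hmr : m ≤ r := (Nat.pow_le_pow_iff_right hp.one_lt).1
    ((Nat.le_of_dvd (minpoly.natDegree_pos hy) hdvd).trans hdeg)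
  obtain ⟨k, hk⟩ := pow_dvd_pow p hmr
  rw [hk, pow_mul]
  exact pow_mem (show y ^ p ^ m ∈ separableClosure K L from hsep) k

theorem EssentiallyFinite.of_natDegree_minpoly_le {n : ℕ}
    (h : ∀ x : L, IsIntegral K x ∧ (minpoly K x).natDegree ≤ n) : EssentiallyFinite K L := by
  have : Algebra.IsIntegral K L := ⟨fun x => (h x).1⟩
  obtain ⟨p, hchar⟩ := CharP.exists K
  rcases CharP.char_is_prime_or_zero K p with hp | rfl
  · have : FiniteDimensional K (separableClosure K L) :=
      finiteDimensional_of_isSeparable_of_natDegree_minpoly_le (n := n) fun x => by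
        rw [minpoly_eq]; exact (h x).2
    have hle : adjoin K (Set.range fun y : L => y ^ p ^ n) ≤ separableClosure K L := by
      rw [adjoin_le_iff]
      rintro _ ⟨y, rfl⟩
      exact isSeparable_pow_of_natDegree_minpoly_le hp (h y).1
        ((h y).2.trans (Nat.lt_pow_self hp.one_lt).le)
    exact Or.inr ⟨p, hp, hchar, inferInstance, n,
      .of_injective (inclusion hle).toLinearMap (inclusion_injective hle)⟩
  · have := CharP.charP_to_charZero K
    have := Algebra.IsSeparable.of_integral K L
    exact Or.inl ⟨hchar, finiteDimensional_of_isSeparable_of_natDegree_minpoly_le fun x => (h x).2⟩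

end

/-- A field extension `L/K` is *strictly infinite* if it is not essentially finite.
For every positive integer `N` there exists `α ∈ L` with `[K(α):K] ≥ N` (or infinite)
if and only if `L/K` is strictly infinite. -/
theorem strictlyInfinite_iff_exists_large_degree
    (K L : Type*) [Field K] [Field L] [Algebra K L] :
    (∀ N : ℕ, 0 < N → ∃ α : L,
      (N : Cardinal) ≤ Module.rank K (IntermediateField.adjoin K ({α} : Set L))) ↔
    ¬ EssentiallyFinite K L := by
  constructor
  · rintro hlarge hfin
    obtain ⟨n, hn, M, hM, hpow⟩ := hfin.exists_pow_mem
    obtain ⟨x, hx⟩ := hlarge (n * finrank K M + 1) (Nat.succ_pos _)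
    have := hx.trans (rank_adjoin_simple_le_of_pow_mem hn (hpow x))
    norm_cast at this
    omega
  · intro hinf
    by_contra! hbdd
    obtain ⟨N, -, hN⟩ := hbdd
    exact hinf (.of_natDegree_minpoly_le fun x =>
      (isIntegral_and_natDegree_minpoly_lt_of_rank_adjoin_simple_lt (hN x)).imp_right le_of_lt)
end

section
/- Let L/K be a field extension. Assume that there exists a perfect subfield F ⊆ K such that K has finite transcendence degree over F and K is separably generated over F, i.e., there exist algebraically independent elements t_1,…,t_m ∈ K over F such that K is an algebraic separable extension of F(t_1,…,t_m). Then L/K is strictly infinite if and only if L/K is infinite (i.e., [L:K] is not finite). -/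
open IntermediateField

section Frobenius

variable {K : Type*} [Field K] (p : ℕ) [ExpChar K p] (r : ℕ)

theorem pow_mem_fieldRange_iterateFrobenius (x : K) :
    x ^ p ^ r ∈ (iterateFrobenius K p r).fieldRange :=
  ⟨x, iterateFrobenius_def p r x⟩

theorem algebraMap_mem_fieldRange_iterateFrobenius {F : Type*} [Field F] [Algebra F K]
    [PerfectField F] (a : F) : algebraMap F K a ∈ (iterateFrobenius K p r).fieldRange := by
  have : ExpChar F p := (algebraMap F K).expChar (algebraMap F K).injective p
  obtain ⟨b, rfl⟩ := (bijective_iterateFrobenius F p r).2 a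
  rw [iterateFrobenius_def, map_pow]
  exact pow_mem_fieldRange_iterateFrobenius p r _

instance isPurelyInseparable_fieldRange_iterateFrobenius :
    IsPurelyInseparable (iterateFrobenius K p r).fieldRange K :=
  (isPurelyInseparable_iff_pow_mem _ p).mpr fun x =>
    ⟨r, ⟨⟨_, pow_mem_fieldRange_iterateFrobenius p r x⟩, rfl⟩⟩

theorem adjoin_fieldRange_iterateFrobenius_eq_top {F : Type*} [Field F] [Algebra F K]
    [PerfectField F] (S : Set K) [Algebra.IsSeparable (adjoin F S) K] :
    adjoin (iterateFrobenius K p r).fieldRange S = ⊤ := by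
  set Kr := (iterateFrobenius K p r).fieldRange
  -- `K = F(S)(K^{p^r})` by separability, and `F(S) ⊆ Kr(S)` as `F` is perfect.
  have : ExpChar (adjoin F S) p :=
    (algebraMap (adjoin F S) K).expChar (algebraMap (adjoin F S) K).injective p
  have hF : (adjoin F S).toSubfield ≤ (adjoin Kr S).toSubfield := by
    rw [adjoin_toSubfield, Subfield.closure_le]
    rintro _ (⟨a, rfl⟩ | hx)
    · exact (adjoin Kr S).algebraMap_mem ⟨_, algebraMap_mem_fieldRange_iterateFrobenius p r a⟩
    · exact subset_adjoin Kr S hx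
  have hpow : (adjoin (adjoin F S) ((· ^ p ^ r) '' Set.univ)).toSubfield ≤
      (adjoin Kr S).toSubfield := by
    rw [adjoin_toSubfield, Subfield.closure_le]
    rintro _ (⟨a, rfl⟩ | ⟨x, -, rfl⟩)
    · exact hF a.2
    · exact (adjoin Kr S).algebraMap_mem ⟨_, pow_mem_fieldRange_iterateFrobenius p r x⟩
  refine eq_top_iff.2 fun x _ => hpow ?_
  rw [← adjoin_eq_adjoin_pow_expChar_pow_of_isSeparable', adjoin_univ]
  trivial

theorem finiteDimensional_fieldRange_iterateFrobenius {F : Type*} [Field F] [Algebra F K]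
    [PerfectField F] (S : Set K) [Finite S] [Algebra.IsSeparable (adjoin F S) K] :
    FiniteDimensional (iterateFrobenius K p r).fieldRange K := by
  have := finiteDimensional_adjoin (K := (iterateFrobenius K p r).fieldRange) (S := S)
    fun x _ => Algebra.IsIntegral.isIntegral x
  rw [adjoin_fieldRange_iterateFrobenius_eq_top (F := F) p r S] at this
  exact topEquiv.toLinearEquiv.finiteDimensional

theorem finiteDimensional_of_finiteDimensional_adjoin_pow {L : Type*} [Field L] [Algebra K L]
    [FiniteDimensional (iterateFrobenius K p r).fieldRange K]
    (h : FiniteDimensional K (adjoin K (Set.range fun y : L => y ^ p ^ r))) :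
    FiniteDimensional K L := by
  set M := adjoin K (Set.range fun y : L => y ^ p ^ r)
  have : ExpChar L p := expChar_of_injective_algebraMap (algebraMap K L).injective p
  have : FiniteDimensional (iterateFrobenius K p r).fieldRange M := Module.Finite.trans K M
  let frobL : L →+ M := (iterateFrobenius L p r).toAddMonoidHom.codRestrict M.toAddSubmonoid
    fun y => subset_adjoin K _ ⟨y, (iterateFrobenius_def p r y).symm⟩
  have hsemilinear : ∀ (c : K) (y : L),
      frobL (c • y) = (iterateFrobenius K p r).rangeRestrictField c • frobL y := by
    intro c y
    ext
    rw [Subfield.smul_def]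
    simp [frobL, Algebra.smul_def, iterateFrobenius_def, mul_pow]
  have hinj : Function.Injective frobL := fun y z hyz =>
    (iterateFrobenius L p r).injective (congrArg Subtype.val hyz)
  let b := Module.Basis.ofVectorSpace K L
  have hli := b.linearIndependent.map_of_surjective_injectiveₛ _ frobL
    (RingHom.rangeRestrictField_bijective _).2 hinj hsemilinear
  have : Finite (Module.Basis.ofVectorSpaceIndex K L) := hli.finite
  exact .of_basis b

end Frobenius

theorem EssentiallyFinite.of_finiteDimensional {K L : Type*} [Field K] [Field L] [Algebra K L]
    [FiniteDimensional K L] : EssentiallyFinite K L := by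
  obtain ⟨q, _⟩ := CharP.exists K
  rcases CharP.char_is_prime_or_zero K q with hq | rfl
  · exact .inr ⟨q, hq, ‹_›, Algebra.IsAlgebraic.of_finite K L, 0, inferInstance⟩
  · exact .inl ⟨‹_›, ‹_›⟩

theorem EssentiallyFinite.finiteDimensional {K L : Type*} [Field K] [Field L] [Algebra K L]
    (hKL : EssentiallyFinite K L)
    (hK : ∀ (p : ℕ) [ExpChar K p] (r : ℕ),
      FiniteDimensional (iterateFrobenius K p r).fieldRange K) :
    FiniteDimensional K L := by
  rcases hKL with ⟨-, h⟩ | ⟨p, hp, _, -, r, h⟩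
  · exact h
  · have : ExpChar K p := .prime hp
    have := hK p r
    exact finiteDimensional_of_finiteDimensional_adjoin_pow p r h

theorem strictlyInfinite_iff_infinite_of_separably_generated_general
    (F K L : Type*) [Field F] [Field K] [Field L]
    [Algebra F K] [Algebra K L] [PerfectField F]
    (m : ℕ) (t : Fin m → K)
    (hsep : Algebra.IsSeparable (IntermediateField.adjoin F (Set.range t)) K) :
    ¬ EssentiallyFinite K L ↔ ¬ FiniteDimensional K L :=
  not_congr ⟨fun h => h.finiteDimensional fun p _ r =>
    finiteDimensional_fieldRange_iterateFrobenius (F := F) p r (Set.range t),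
    fun _ => .of_finiteDimensional⟩

/-- Suppose there is a perfect subfield `F ⊆ K` such that `K` has finite transcendence
degree over `F` and is separably generated over `F`, i.e. there are finitely many
algebraically independent elements `t_1, …, t_m` of `K` over `F` such that `K` is an
algebraic separable extension of `F(t_1, …, t_m)`.  Then `L/K` is strictly infinite
(not essentially finite) if and only if `L/K` is infinite. -/
theorem strictlyInfinite_iff_infinite_of_separably_generated
    (F K L : Type*) [Field F] [Field K] [Field L]
    [Algebra F K] [Algebra K L] [PerfectField F]
    (m : ℕ) (t : Fin m → K) (hind : AlgebraicIndependent F t)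
    (hsep : Algebra.IsSeparable (IntermediateField.adjoin F (Set.range t)) K) :
    ¬ EssentiallyFinite K L ↔ ¬ FiniteDimensional K L :=
  strictlyInfinite_iff_infinite_of_separably_generated_general F K L m t hsep
end

section
/- Let K be an infinite field and E a finite-dimensional associative unital K-algebra. Then the K-subalgebra of E generated by the group of units E^× equals E. -/
/-!
An element `x` lies in the subalgebra generated by the units as soon as some scalar `c` lies
outside its spectrum, for then `x = c - (c - x)` with `c - x` a unit. Over a field, the spectrum
of an integral element consists of roots of its minimal polynomial, so it is finite; since `K`
is infinite, such a `c` exists.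
-/

open Polynomial

theorem spectrum.subset_setOf_isRoot_of_aeval_eq_zero {K A : Type*} [Field K] [Ring A]
    [Algebra K A] {a : A} {p : K[X]} (hp : aeval a p = 0) :
    spectrum K a ⊆ {k | p.IsRoot k} := by
  intro k hk
  have hmem := spectrum.subset_polynomial_aeval a p ⟨k, hk, rfl⟩
  rw [hp, spectrum.mem_iff, sub_zero] at hmem
  by_contra hroot
  exact hmem ((Units.mk0 _ hroot).isUnit.map (algebraMap K A))

theorem spectrum.finite_of_isIntegral {K A : Type*} [Field K] [Ring A] [Algebra K A] {a : A}
    (ha : IsIntegral K a) : (spectrum K a).Finite :=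
  (finite_setOfPred_isRoot (minpoly.ne_zero ha)).subset
    (spectrum.subset_setOf_isRoot_of_aeval_eq_zero (minpoly.aeval K a))

theorem Algebra.adjoin_units_eq_top_of_exists_notMem_spectrum {R A : Type*} [CommRing R]
    [Ring A] [Algebra R A] (h : ∀ a : A, ∃ r : R, r ∉ spectrum R a) :
    Algebra.adjoin R {x : A | IsUnit x} = ⊤ := by
  refine Algebra.eq_top_iff.mpr fun a => ?_
  obtain ⟨r, hr⟩ := h a
  have hunit : algebraMap R A r - a ∈ Algebra.adjoin R {x : A | IsUnit x} :=
    Algebra.subset_adjoin (spectrum.notMem_iff.mp hr)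
  rw [← sub_sub_cancel (algebraMap R A r) a]
  exact sub_mem (Subalgebra.algebraMap_mem _ r) hunit

/-- Let `K` be an infinite field and `E` a finite-dimensional associative unital
`K`-algebra.  Then the `K`-subalgebra of `E` generated by the group of units `Eˣ`
equals `E`. -/
theorem adjoin_units_eq_top_of_infinite_field
    (K E : Type*) [Field K] [Infinite K] [Ring E] [Algebra K E]
    [FiniteDimensional K E] :
    Algebra.adjoin K {x : E | IsUnit x} = ⊤ :=
  Algebra.adjoin_units_eq_top_of_exists_notMem_spectrum fun x =>
    (spectrum.finite_of_isIntegral (Algebra.IsIntegral.isIntegral x)).exists_notMem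
end

section
/- Let K be a field, n ≥ 2, 0 < r < n, and V0 an n-dimensional K-vector space. Then the map sending an r-dimensional K-subspace U ⊆ V0 to the subalgebra {α ∈ End_K(V0) : α(U) ⊆ U} is a bijection from the set of r-dimensional K-subspaces of V0 onto the set of parabolic K-subalgebras of End_K(V0) of type (r, n−r). -/
/-!
Extending a basis of an `r`-dimensional subspace `U` to a basis of `V` exhibits `U` as the span
of the first `r` basis vectors, so its stabilizer is parabolic; conversely such a span has
dimension `r`. The stabilizer determines the subspace: if `U ⊄ U'` with `U ≠ V`, a rank-one
endomorphism stabilizes `U'` but not `U`, and subspaces of equal dimension with `U ≤ U'` coincide.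
-/

/-- The stabilizer set of a subspace `U`: endomorphisms of `V` mapping `U` into itself.
(This is a `K`-subalgebra of `End_K(V)`.) -/
def stabilizerSet (K V : Type*) [Field K] [AddCommGroup V] [Module K V]
    (U : Submodule K V) : Set (Module.End K V) :=
  {α : Module.End K V | ∀ x ∈ U, α x ∈ U}

/-- A subset of `End_K(V)` is a *parabolic subalgebra of type `(r, n − r)`* if, with
respect to some `K`-basis of `V` (indexed by `Fin n`), it is the algebra of block
upper-triangular matrices `[[Mat_r(K), Mat_{r,n−r}(K)], [0, Mat_{n−r}(K)]]`;
equivalently, it is the stabilizer algebra of the span of the first `r` basis vectors. -/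
def IsParabolicOfType (K V : Type*) [Field K] [AddCommGroup V] [Module K V]
    (n r : ℕ) (S : Set (Module.End K V)) : Prop :=
  ∃ b : Module.Basis (Fin n) K V,
    S = stabilizerSet K V (Submodule.span K (⇑b '' {i : Fin n | (i : ℕ) < r}))

open Module Submodule

theorem Fin.image_setOf_val_lt {α : Type*} {n r : ℕ} (f : Fin n → α) (h : r ≤ n) :
    f '' {i : Fin n | (i : ℕ) < r} = Set.range (f ∘ Fin.castLE h) := by
  rw [← Fin.range_castLE h, Set.range_comp]

section

variable {K V : Type*} [Field K] [AddCommGroup V] [Module K V]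

theorem finrank_span_basis_image_setOf_val_lt {n r : ℕ} (b : Basis (Fin n) K V) (h : r ≤ n) :
    finrank K (span K (b '' {i : Fin n | (i : ℕ) < r})) = r := by
  rw [Fin.image_setOf_val_lt b h,
    finrank_span_eq_card (b.linearIndependent.comp _ (Fin.castLE_injective h)), Fintype.card_fin]

theorem exists_basis_comp_castLE_eq [FiniteDimensional K V] {n r : ℕ} (h : r ≤ n)
    (hdim : finrank K V = n) {U : Submodule K V} (bU : Basis (Fin r) K U) :
    ∃ b : Basis (Fin n) K V, b ∘ Fin.castLE h = Subtype.val ∘ bU := by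
  obtain ⟨W, hW⟩ := U.exists_isCompl
  have hWdim : finrank K W = n - r := by
    have := finrank_add_eq_of_isCompl hW
    rw [finrank_eq_card_basis bU, Fintype.card_fin] at this
    omega
  let e : Fin r ⊕ Fin (n - r) ≃ Fin n := finSumFinEquiv.trans (finCongr (by omega))
  refine ⟨((bU.prod (finBasisOfFinrankEq K W hWdim)).map (prodEquivOfIsCompl U W hW)).reindex e,
    ?_⟩
  funext j
  have he : e.symm (Fin.castLE h j) = Sum.inl j := by
    rw [Equiv.symm_apply_eq]; ext; simp [e]
  simp [he]

theorem exists_basis_span_image_setOf_val_lt_eq [FiniteDimensional K V] {n r : ℕ} (h : r ≤ n)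
    (hdim : finrank K V = n) {U : Submodule K V} (hU : finrank K U = r) :
    ∃ b : Basis (Fin n) K V, span K (b '' {i : Fin n | (i : ℕ) < r}) = U := by
  let bU := finBasisOfFinrankEq K U hU
  obtain ⟨b, hb⟩ := exists_basis_comp_castLE_eq h hdim bU
  refine ⟨b, ?_⟩
  rw [Fin.image_setOf_val_lt b h, hb, Set.range_comp, ← U.coe_subtype, ← map_span, bU.span_eq,
    map_subtype_top]

theorem le_of_stabilizerSet_subset {U U' : Submodule K V} (hU : U ≠ ⊤)
    (h : stabilizerSet K V U' ⊆ stabilizerSet K V U) : U ≤ U' := by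
  intro x hx
  by_contra hx'
  obtain ⟨y, hy⟩ : ∃ y, y ∉ U := by
    by_contra! hall
    exact hU (eq_top_iff'.mpr hall)
  obtain ⟨f, hfx, hfU'⟩ := U'.exists_dual_map_eq_bot_of_notMem hx' inferInstance
  -- `v ↦ f v • y` kills `U'`, but sends `x ∈ U` to a nonzero multiple of `y ∉ U`
  have hstab : f.smulRight y ∈ stabilizerSet K V U' := fun u hu => by
    simp [LinearMap.mem_ker.mp (LinearMap.le_ker_iff_map.mpr hfU' hu)]
  exact hy ((smul_mem_iff _ hfx).mp (h hstab x hx))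

theorem injOn_stabilizerSet_setOf_finrank_eq [FiniteDimensional K V] {r : ℕ}
    (hr : r < finrank K V) : Set.InjOn (stabilizerSet K V) {U | finrank K U = r} := by
  intro U hU U' hU' h
  have hUtop : U ≠ ⊤ := by
    rintro rfl
    exact hr.ne (hU.symm.trans (finrank_top K V))
  exact eq_of_le_of_finrank_eq (le_of_stabilizerSet_subset hUtop h.ge) (hU.trans hU'.symm)

end

theorem bijOn_stabilizer_parabolic_general
    (K V : Type*) [Field K] [AddCommGroup V] [Module K V] [FiniteDimensional K V]
    (n r : ℕ) (hrn : r < n)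
    (hdim : Module.finrank K V = n) :
    Set.BijOn (fun U : Submodule K V => stabilizerSet K V U)
      {U : Submodule K V | Module.finrank K U = r}
      {S : Set (Module.End K V) | IsParabolicOfType K V n r S} := by
  refine ⟨?_, injOn_stabilizerSet_setOf_finrank_eq (hdim ▸ hrn), ?_⟩
  · intro U hU
    obtain ⟨b, hb⟩ := exists_basis_span_image_setOf_val_lt_eq hrn.le hdim hU
    exact ⟨b, by rw [hb]⟩
  · rintro S ⟨b, rfl⟩
    exact ⟨_, finrank_span_basis_image_setOf_val_lt b hrn.le, rfl⟩

/-- Let `K` be a field, `n ≥ 2`, `0 < r < n`, and `V` an `n`-dimensional `K`-vector space.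
The map sending an `r`-dimensional `K`-subspace `U ⊆ V` to the subalgebra
`{α ∈ End_K(V) : α(U) ⊆ U}` is a bijection from the set of `r`-dimensional subspaces of
`V` onto the set of parabolic `K`-subalgebras of `End_K(V)` of type `(r, n − r)`. -/
theorem bijOn_stabilizer_parabolic
    (K V : Type*) [Field K] [AddCommGroup V] [Module K V] [FiniteDimensional K V]
    (n r : ℕ) (hn : 2 ≤ n) (hr : 0 < r) (hrn : r < n)
    (hdim : Module.finrank K V = n) :
    Set.BijOn (fun U : Submodule K V => stabilizerSet K V U)
      {U : Submodule K V | Module.finrank K U = r}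
      {S : Set (Module.End K V) | IsParabolicOfType K V n r S} :=
  bijOn_stabilizer_parabolic_general K V n r hrn hdim
end

section
/- Let K ⊆ L ⊆ L' be a tower of fields, V0 a finite-dimensional K-vector space, and W an L-subspace of V0 ⊗_K L. Let W_{L'} ⊆ V0 ⊗_K L' denote the L'-span of the image of W under the canonical map V0 ⊗_K L → V0 ⊗_K L'. Then End(V0, W_{L'}) = End(V0, W). -/
/-!
Since `L'` is faithfully flat over `L`, the canonical map `V ⊗_K L → V ⊗_K L'` identifies
`W_{L'}` with `W ⊗_L L'` and pulls it back exactly to `W`. As `α ⊗ id` commutes with this map,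
`α ⊗ id_{L'}` preserves `W_{L'}` if and only if `α ⊗ id_L` preserves `W`.
-/

open scoped TensorProduct

/-- The relative endomorphism algebra `End(V, W)` of an `L`-subspace `W ⊆ V ⊗_K L`:
the `K`-endomorphisms of `V` whose `L`-linear extension maps `W` into itself. -/
def relEnd (K L V : Type*) [Field K] [Field L] [Algebra K L]
    [AddCommGroup V] [Module K V] (W : Submodule L (L ⊗[K] V)) :
    Set (Module.End K V) :=
  {α : Module.End K V | Submodule.map (LinearMap.baseChange L α) W ≤ W}

open TensorProduct

theorem Submodule.one_tmul_mem_baseChange_iff {R A M : Type*} [CommRing R] [Ring A] [Algebra R A]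
    [Module.FaithfullyFlat R A] [AddCommGroup M] [Module R M] (p : Submodule R M) (m : M) :
    (1 : A) ⊗ₜ[R] m ∈ p.baseChange A ↔ m ∈ p := by
  refine ⟨fun h ↦ ?_, tmul_mem_baseChange_of_mem 1⟩
  have hker : p.baseChange A ≤ LinearMap.ker (p.mkQ.baseChange A) := by
    rw [baseChange, LinearMap.range_le_ker_iff, ← LinearMap.baseChange_comp,
      show p.mkQ ∘ₗ p.subtype = 0 by ext; simp, LinearMap.baseChange_zero]
  have hzero := hker h
  rwa [LinearMap.mem_ker, LinearMap.baseChange_tmul, Module.FaithfullyFlat.one_tmul_eq_zero_iff,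
    mkQ_apply, Quotient.mk_eq_zero] at hzero

theorem LinearMap.rTensor_baseChange_comm {R A B M N : Type*} [CommSemiring R] [Semiring A]
    [Semiring B] [Algebra R A] [Algebra R B] [AddCommMonoid M] [Module R M] [AddCommMonoid N]
    [Module R N] (g : A →ₗ[R] B) (f : M →ₗ[R] N) (x : A ⊗[R] M) :
    g.rTensor N (f.baseChange A x) = f.baseChange B (g.rTensor M x) := by
  simp only [baseChange_eq_ltensor, ← comp_apply, rTensor_comp_lTensor, lTensor_comp_rTensor]

section Tower

variable {R A B M : Type*} [CommSemiring R] [CommSemiring A] [CommSemiring B]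
  [Algebra R A] [Algebra A B] [Algebra R B] [IsScalarTower R A B]
  [AddCommMonoid M] [Module R M]

theorem TensorProduct.AlgebraTensorModule.cancelBaseChange_one_tmul (x : A ⊗[R] M) :
    cancelBaseChange R A B B M ((1 : B) ⊗ₜ[A] x) =
      (IsScalarTower.toAlgHom R A B).toLinearMap.rTensor M x := by
  induction x using TensorProduct.induction_on with
  | zero => simp
  | tmul a m => simp [_root_.Algebra.smul_def]
  | add x y hx hy => simp only [tmul_add, map_add, hx, hy]

theorem Submodule.span_image_rTensor_eq_map_baseChange (W : Submodule A (A ⊗[R] M)) :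
    span B ((IsScalarTower.toAlgHom R A B).toLinearMap.rTensor M '' W) =
      (W.baseChange B).map (AlgebraTensorModule.cancelBaseChange R A B B M).toLinearMap := by
  rw [baseChange_eq_span, map_span, map_coe, ← Set.image_comp]
  exact congrArg _ (Set.image_congr fun x _ ↦ (AlgebraTensorModule.cancelBaseChange_one_tmul x).symm)

end Tower

theorem Submodule.rTensor_mem_span_image_rTensor_iff {R A B M : Type*} [CommRing R] [CommRing A]
    [CommRing B] [Algebra R A] [Algebra A B] [Algebra R B] [IsScalarTower R A B]
    [Module.FaithfullyFlat A B] [AddCommGroup M] [Module R M]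
    (W : Submodule A (A ⊗[R] M)) (x : A ⊗[R] M) :
    (IsScalarTower.toAlgHom R A B).toLinearMap.rTensor M x ∈
        span B ((IsScalarTower.toAlgHom R A B).toLinearMap.rTensor M '' W) ↔ x ∈ W := by
  rw [span_image_rTensor_eq_map_baseChange, ← AlgebraTensorModule.cancelBaseChange_one_tmul,
    mem_map_equiv, LinearEquiv.symm_apply_apply, one_tmul_mem_baseChange_iff]

theorem relEnd_extend_scalars_general
    (K L L' V : Type*) [Field K] [Field L] [Field L']
    [Algebra K L] [Algebra L L'] [Algebra K L'] [IsScalarTower K L L']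
    [AddCommGroup V] [Module K V]
    (W : Submodule L (L ⊗[K] V)) :
    relEnd K L' V
      (Submodule.span L'
        (LinearMap.rTensor V (IsScalarTower.toAlgHom K L L').toLinearMap '' (W : Set (L ⊗[K] V)))) =
    relEnd K L V W := by
  ext α
  simp only [relEnd, Set.mem_ofPred_eq, Submodule.map_le_iff_le_comap, Submodule.span_le]
  constructor
  · intro h x hx
    rw [Submodule.mem_comap, ← Submodule.rTensor_mem_span_image_rTensor_iff (B := L'),
      LinearMap.rTensor_baseChange_comm]
    exact h ⟨x, hx, rfl⟩
  · rintro h _ ⟨x, hx, rfl⟩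
    rw [SetLike.mem_coe, Submodule.mem_comap, ← LinearMap.rTensor_baseChange_comm]
    exact Submodule.subset_span ⟨_, h hx, rfl⟩

/-- Let `K ⊆ L ⊆ L'` be a tower of fields, `V` a finite-dimensional `K`-vector space, and
`W` an `L`-subspace of `V ⊗_K L`.  Let `W_{L'} ⊆ V ⊗_K L'` be the `L'`-span of the image
of `W` under the canonical map `V ⊗_K L → V ⊗_K L'`.  Then `End(V, W_{L'}) = End(V, W)`. -/
theorem relEnd_extend_scalars
    (K L L' V : Type*) [Field K] [Field L] [Field L']
    [Algebra K L] [Algebra L L'] [Algebra K L'] [IsScalarTower K L L']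
    [AddCommGroup V] [Module K V] [FiniteDimensional K V]
    (W : Submodule L (L ⊗[K] V)) :
    relEnd K L' V
      (Submodule.span L'
        (LinearMap.rTensor V (IsScalarTower.toAlgHom K L L').toLinearMap '' (W : Set (L ⊗[K] V)))) =
    relEnd K L V W :=
  relEnd_extend_scalars_general K L L' V W
end

section
/- Let k0 be a field, k an algebraically closed field containing k0, n ≥ 2 and 0 < r < n. Let T = (t_{ij}) ∈ Mat_{(n−r)×r}(k) and suppose that the evaluation map ev_T : f ↦ f(T), from the k0-subspace of polynomials of total degree ≤ 2 in the polynomial ring k0[X_{ij} : 1 ≤ i ≤ n−r, 1 ≤ j ≤ r] to k, is injective. Let W_T ⊆ k^n be the k-span of the r columns of the n×r block matrix with upper block T and lower block the identity I_r. Then {A ∈ Mat_n(k0) : A·W_T ⊆ W_T} = k0·I_n, i.e., the only matrices with entries in k0 preserving W_T are the scalar matrices. -/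
/-!
Write `A = [P Q; R S]` in blocks. Since `W_T` is the graph `{(T y, y)}`, `A W_T ⊆ W_T` says exactly
that `T` solves the matrix Riccati equation `P T + Q = T (R T + S)`. In the generic matrix `X`, the
entries of `Q + (P X - X S) - X R X` are polynomials of degree `≤ 2` over `k₀` vanishing at `T`, so
they vanish identically; separating homogeneous parts gives `Q = 0`, `P X = X S` and `X R X = 0`.
Specializing `X` to matrix units then forces `R = 0` and `P = c • 1`, `S = c • 1`.
-/

/-- The `k`-span `W_T` of the `r` columns of the `n × r` block matrix with upper block `T`
and lower block the identity `I_r`, inside `k^n = k^{(n-r)} ⊕ k^r`. -/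
def colSpanT (k : Type*) [Field k] (m r : ℕ) (T : Matrix (Fin m) (Fin r) k) :
    Submodule k ((Fin m ⊕ Fin r) → k) :=
  Submodule.span k (Set.range fun j : Fin r =>
    (Sum.elim (fun i => T i j) (fun i => if i = j then (1 : k) else 0) :
      (Fin m ⊕ Fin r) → k))

open MvPolynomial Matrix

section Homogeneous

variable {σ R : Type*} [CommRing R]

theorem eq_zero_of_C_add_sub_eq_zero {c : R} {φ ψ : MvPolynomial σ R}
    (hφ : φ.IsHomogeneous 1) (hψ : ψ.IsHomogeneous 2) (h : C c + φ - ψ = 0) :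
    c = 0 ∧ φ = 0 ∧ ψ = 0 := by
  have h₀ := congrArg (homogeneousComponent 0) h
  have h₁ := congrArg (homogeneousComponent 1) h
  have h₂ := congrArg (homogeneousComponent 2) h
  simp only [map_add, map_sub, map_zero, homogeneousComponent_of_mem hφ,
    homogeneousComponent_of_mem hψ, homogeneousComponent_of_mem (isHomogeneous_C σ c)] at h₀ h₁ h₂
  norm_num at h₀ h₁ h₂
  exact ⟨h₀, h₁, h₂⟩

theorem eq_zero_of_aeval_C_add_sub_eq_zero {S : Type*} [CommRing S] [Algebra R S] {x : σ → S}
    (hinj : Set.InjOn (aeval x) {f : MvPolynomial σ R | f.totalDegree ≤ 2})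
    {c : R} {φ ψ : MvPolynomial σ R} (hφ : φ.IsHomogeneous 1) (hψ : ψ.IsHomogeneous 2)
    (h : aeval x (C c + φ - ψ) = 0) : c = 0 ∧ φ = 0 ∧ ψ = 0 := by
  have hdeg : (C c + φ - ψ).totalDegree ≤ 2 :=
    (totalDegree_sub _ _).trans <| max_le ((totalDegree_add _ _).trans <|
      max_le (by simp) (hφ.totalDegree_le.trans (by norm_num))) hψ.totalDegree_le
  exact eq_zero_of_C_add_sub_eq_zero hφ hψ <| hinj hdeg (by simp) (h.trans (map_zero _).symm)

end Homogeneous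

namespace Matrix

theorem isHomogeneous_mul_apply {l m n σ R : Type*} [Fintype m] [CommSemiring R]
    {M : Matrix l m (MvPolynomial σ R)} {N : Matrix m n (MvPolynomial σ R)} {d e : ℕ}
    (hM : ∀ i j, (M i j).IsHomogeneous d) (hN : ∀ i j, (N i j).IsHomogeneous e)
    (i : l) (k : n) : ((M * N) i k).IsHomogeneous (d + e) :=
  IsHomogeneous.sum _ _ _ fun j _ => (hM i j).mul (hN j k)

theorem mvPolynomialX_map_aeval {m r K B : Type*} [CommSemiring K] [CommSemiring B]
    [Algebra K B] (Y : Matrix m r B) :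
    (mvPolynomialX m r K).map (aeval fun p : m × r => Y p.1 p.2) = Y :=
  mvPolynomialX_map_eval₂ _ Y

theorem map_C_map_aeval {m r σ K B : Type*} [CommSemiring K] [CommSemiring B] [Algebra K B]
    (x : σ → B) (M : Matrix m r K) :
    (M.map (C : K → MvPolynomial σ K)).map (aeval x) = M.map (algebraMap K B) := by
  ext; simp

section Riccati

variable {m r K : Type*} [Fintype m] [Fintype r] [CommRing K]

local notation "𝕏" => mvPolynomialX m r K
local notation "ι" => (C : K →+* MvPolynomial (m × r) K)

theorem mvPolynomialX_riccati_of_injOn_aeval {B : Type*} [CommRing B] [Algebra K B]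
    {Y : Matrix m r B} (hinj : Set.InjOn (aeval fun p : m × r => Y p.1 p.2)
      {f : MvPolynomial (m × r) K | f.totalDegree ≤ 2})
    {P : Matrix m m K} {Q : Matrix m r K} {R : Matrix r m K} {S : Matrix r r K}
    (h : P.map (algebraMap K B) * Y + Q.map (algebraMap K B) =
      Y * (R.map (algebraMap K B) * Y + S.map (algebraMap K B))) :
    Q = 0 ∧ P.map ι * 𝕏 = 𝕏 * S.map ι ∧ 𝕏 * R.map ι * 𝕏 = 0 := by
  have hlin : ∀ i j, ((P.map ι * 𝕏 - 𝕏 * S.map ι) i j).IsHomogeneous 1 := fun i j =>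
    (isHomogeneous_mul_apply (d := 0) (fun _ _ => isHomogeneous_C _ _)
      (fun _ _ => isHomogeneous_X _ _) i j).sub
      (isHomogeneous_mul_apply (e := 0) (fun _ _ => isHomogeneous_X _ _)
        (fun _ _ => isHomogeneous_C _ _) i j)
  have hquad : ∀ i j, ((𝕏 * R.map ι * 𝕏) i j).IsHomogeneous 2 := fun i j =>
    isHomogeneous_mul_apply (isHomogeneous_mul_apply (e := 0) (fun _ _ => isHomogeneous_X _ _)
      (fun _ _ => isHomogeneous_C _ _)) (fun _ _ => isHomogeneous_X _ _) i j
  have hY : (Q.map ι + (P.map ι * 𝕏 - 𝕏 * S.map ι) - 𝕏 * R.map ι * 𝕏 :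
      Matrix m r (MvPolynomial (m × r) K)).map (aeval fun p : m × r => Y p.1 p.2) = 0 := by
    have hX := mvPolynomialX_map_aeval (K := K) Y
    -- At reducible transparency `Y p.1` is ill-typed (`Matrix` is not unfolded), which makes
    -- `simp` fail on `fun p => Y p.1 p.2`; naming it avoids this.
    set x := fun p : m × r => Y p.1 p.2
    simp only [Matrix.map_add, Matrix.map_sub, Matrix.map_mul, map_add, map_sub, map_C_map_aeval,
      hX, implies_true]
    rw [← sub_eq_zero.mpr h, Matrix.mul_add, Matrix.mul_assoc]
    abel
  have hzero : ∀ i j, Q i j = 0 ∧ (P.map ι * 𝕏 - 𝕏 * S.map ι) i j = 0 ∧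
      (𝕏 * R.map ι * 𝕏) i j = 0 := fun i j =>
    eq_zero_of_aeval_C_add_sub_eq_zero hinj (hlin i j) (hquad i j)
      (by simpa using congrFun (congrFun hY i) j)
  exact ⟨ext fun i j => (hzero i j).1, sub_eq_zero.mp (ext fun i j => (hzero i j).2.1),
    ext fun i j => (hzero i j).2.2⟩

theorem riccati_split_of_injOn_aeval {B : Type*} [CommRing B] [Algebra K B] {Y : Matrix m r B}
    (hinj : Set.InjOn (aeval fun p : m × r => Y p.1 p.2)
      {f : MvPolynomial (m × r) K | f.totalDegree ≤ 2})
    {P : Matrix m m K} {Q : Matrix m r K} {R : Matrix r m K} {S : Matrix r r K}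
    (h : P.map (algebraMap K B) * Y + Q.map (algebraMap K B) =
      Y * (R.map (algebraMap K B) * Y + S.map (algebraMap K B))) :
    Q = 0 ∧ ∀ Z : Matrix m r K, P * Z = Z * S ∧ Z * R * Z = 0 := by
  obtain ⟨hQ, hlin, hquad⟩ := mvPolynomialX_riccati_of_injOn_aeval hinj h
  refine ⟨hQ, fun Z => ?_⟩
  have hX := mvPolynomialX_map_aeval (K := K) Z
  set x := fun p : m × r => Z p.1 p.2
  have hlin := congrArg (Matrix.map · (aeval x)) hlin
  have hquad := congrArg (Matrix.map · (aeval x)) hquad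
  simp only [Matrix.map_mul, map_C_map_aeval, hX, Algebra.algebraMap_self, RingHom.coe_id,
    Matrix.map_id, Matrix.map_zero, map_zero] at hlin hquad
  exact ⟨hlin, hquad⟩

end Riccati

section MatrixUnits

variable {m r K : Type*} [Fintype m] [Fintype r] [DecidableEq m] [DecidableEq r] [CommRing K]

theorem exists_eq_smul_one_of_forall_mul_eq_mul [Nonempty m] [Nonempty r]
    {P : Matrix m m K} {S : Matrix r r K} (h : ∀ Z : Matrix m r K, P * Z = Z * S) :
    ∃ c : K, P = c • 1 ∧ S = c • 1 := by
  obtain ⟨a₀⟩ := ‹Nonempty m›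
  obtain ⟨b₀⟩ := ‹Nonempty r›
  have hP : P = S b₀ b₀ • 1 := by
    ext i a
    have hia := congrFun (congrFun (h (single a b₀ 1)) i) b₀
    rcases eq_or_ne i a with rfl | hne
    · simpa using hia
    · simpa [hne, single_mul_apply_of_ne _ _ _ _ _ hne] using hia
  refine ⟨S b₀ b₀, hP, ?_⟩
  ext b j
  have hbj := congrFun (congrFun (h (single a₀ b 1)) a₀) j
  rcases eq_or_ne j b with rfl | hne
  · simpa [hP] using hbj.symm
  · simpa [Ne.symm hne, mul_single_apply_of_ne _ _ _ _ _ hne] using hbj.symm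

theorem eq_zero_of_forall_mul_mul_eq_zero {R : Matrix r m K}
    (h : ∀ Z : Matrix m r K, Z * R * Z = 0) : R = 0 := by
  ext b a
  simpa using congrFun (congrFun (h (single a b 1)) a) b

end MatrixUnits

end Matrix

theorem comp_inl_eq_mulVec_of_mem_colSpanT {k : Type*} [Field k] {m r : ℕ}
    {T : Matrix (Fin m) (Fin r) k} {v : Fin m ⊕ Fin r → k} (hv : v ∈ colSpanT k m r T) :
    v ∘ Sum.inl = T *ᵥ (v ∘ Sum.inr) := by
  induction hv using Submodule.span_induction with
  | mem x hx =>
    obtain ⟨j, rfl⟩ := hx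
    ext i; simp [mulVec, dotProduct]
  | zero => ext; simp
  | add x y _ _ hx hy => rw [Pi.add_comp, Pi.add_comp, hx, hy, mulVec_add]
  | smul c x _ hx => rw [Pi.smul_comp, Pi.smul_comp, hx, mulVec_smul]

theorem riccati_toBlocks_of_mulVec_mem_colSpanT {k : Type*} [Field k] {m r : ℕ}
    {T : Matrix (Fin m) (Fin r) k} {B : Matrix (Fin m ⊕ Fin r) (Fin m ⊕ Fin r) k}
    (hB : ∀ x ∈ colSpanT k m r T, B *ᵥ x ∈ colSpanT k m r T) :
    B.toBlocks₁₁ * T + B.toBlocks₁₂ = T * (B.toBlocks₂₁ * T + B.toBlocks₂₂) := by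
  ext i j
  have := congrFun (comp_inl_eq_mulVec_of_mem_colSpanT (hB _ (Submodule.subset_span ⟨j, rfl⟩))) i
  simpa [mulVec, dotProduct, Fintype.sum_sum_type, mul_apply, toBlocks₁₁, toBlocks₁₂, toBlocks₂₁,
    toBlocks₂₂] using this

theorem stabilizer_eq_scalars_of_degree_two_injective_general
    (k₀ k : Type*) [Field k₀] [Field k] [Algebra k₀ k]
    (n r : ℕ) (hr : 0 < r) (hrn : r < n)
    (T : Matrix (Fin (n - r)) (Fin r) k)
    (hinj : Set.InjOn (MvPolynomial.aeval fun p : Fin (n - r) × Fin r => T p.1 p.2)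
      {f : MvPolynomial (Fin (n - r) × Fin r) k₀ | f.totalDegree ≤ 2}) :
    {A : Matrix (Fin (n - r) ⊕ Fin r) (Fin (n - r) ⊕ Fin r) k₀ |
        ∀ x ∈ colSpanT k (n - r) r T,
          (A.map (algebraMap k₀ k)).mulVec x ∈ colSpanT k (n - r) r T} =
      {A : Matrix (Fin (n - r) ⊕ Fin r) (Fin (n - r) ⊕ Fin r) k₀ |
        ∃ a : k₀, A = a • (1 : Matrix (Fin (n - r) ⊕ Fin r) (Fin (n - r) ⊕ Fin r) k₀)} := by
  have : Nonempty (Fin (n - r)) := Fin.pos_iff_nonempty.mp (Nat.sub_pos_of_lt hrn)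
  have : Nonempty (Fin r) := Fin.pos_iff_nonempty.mp hr
  ext A
  constructor
  · intro hA
    obtain ⟨hQ, hZ⟩ := riccati_split_of_injOn_aeval hinj (P := A.toBlocks₁₁)
      (Q := A.toBlocks₁₂) (R := A.toBlocks₂₁) (S := A.toBlocks₂₂)
      (riccati_toBlocks_of_mulVec_mem_colSpanT hA)
    obtain ⟨c, hP, hS⟩ := exists_eq_smul_one_of_forall_mul_eq_mul fun Z => (hZ Z).1
    have hR := eq_zero_of_forall_mul_mul_eq_zero fun Z => (hZ Z).2
    refine ⟨c, ?_⟩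
    rw [← fromBlocks_toBlocks A, hP, hQ, hR, hS, ← fromBlocks_one, fromBlocks_smul, smul_zero,
      smul_zero]
  · rintro ⟨c, rfl⟩ x hx
    rw [Matrix.map_smul' _ _ _ (map_mul _), Matrix.map_one _ (map_zero _) (map_one _),
      smul_mulVec, one_mulVec]
    exact Submodule.smul_mem _ _ hx

/-- Let `k₀` be a field, `k` an algebraically closed field containing `k₀`, `n ≥ 2` and
`0 < r < n`.  Let `T ∈ Mat_{(n−r)×r}(k)` and suppose that evaluation at `T` is injective on
the `k₀`-subspace of polynomials of total degree `≤ 2` in `k₀[X_{ij}]`.  Let `W_T ⊆ k^n` be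
the `k`-span of the columns of the block matrix `[T; I_r]`.  Then the only matrices with
entries in `k₀` preserving `W_T` are the scalar matrices. -/
theorem stabilizer_eq_scalars_of_degree_two_injective
    (k₀ k : Type*) [Field k₀] [Field k] [IsAlgClosed k] [Algebra k₀ k]
    (n r : ℕ) (hn : 2 ≤ n) (hr : 0 < r) (hrn : r < n)
    (T : Matrix (Fin (n - r)) (Fin r) k)
    (hinj : Set.InjOn (MvPolynomial.aeval fun p : Fin (n - r) × Fin r => T p.1 p.2)
      {f : MvPolynomial (Fin (n - r) × Fin r) k₀ | f.totalDegree ≤ 2}) :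
    {A : Matrix (Fin (n - r) ⊕ Fin r) (Fin (n - r) ⊕ Fin r) k₀ |
        ∀ x ∈ colSpanT k (n - r) r T,
          (A.map (algebraMap k₀ k)).mulVec x ∈ colSpanT k (n - r) r T} =
      {A : Matrix (Fin (n - r) ⊕ Fin r) (Fin (n - r) ⊕ Fin r) k₀ |
        ∃ a : k₀, A = a • (1 : Matrix (Fin (n - r) ⊕ Fin r) (Fin (n - r) ⊕ Fin r) k₀)} :=
  stabilizer_eq_scalars_of_degree_two_injective_general k₀ k n r hr hrn T hinj
end

section
/- Let k0 be a field and k an algebraically closed field such that the extension k/k0 is infinite, and let 0 < r < n. Then there exists an r-dimensional k-subspace W ⊆ k^n such that {A ∈ Mat_n(k0) : A·W ⊆ W} = k0·I_n. Moreover, every r-dimensional k-subspace W ⊆ k^n with {A ∈ Mat_n(k0) : A·W ⊆ W} = k0·I_n is k0-null and k0-dense: W ∩ k0^n = 0 and W is not contained in U ⊗_{k0} k for any proper k0-subspace U ⊊ k0^n. -/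
/-!
Take `W` to be the graph `{(u, M u)}` of an `(n - r) × r` matrix `M` whose entries are
`θ ^ 3 ^ E(i, b)`, where `E` enumerates the entries and `θ ∈ k` is not a root of any nonzero
polynomial over `k₀` of small degree. Such a `θ` exists because `k/k₀` is infinite: a separable
algebraic extension of bounded degree is finite (primitive element theorem), and over an
imperfect field the iterated `p`-th roots of a non-`p`-th power have unbounded degree.

A matrix `A` over `k₀` preserving the graph satisfies `A₂₁ + A₂₂ M = M (A₁₁ + A₁₂ M)`. Each entry
of this identity is a polynomial relation of small degree for `θ`, hence holds in `k₀[X]`; since a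
sum of two powers of `3` determines its summands, comparing coefficients forces `A` to be scalar.

Finally, a nonzero `k₀`-rational vector in `W`, or a nonzero `k₀`-linear form vanishing on `W`,
yields a nonzero rank-one matrix over `k₀` preserving `W`, and such a matrix is never scalar when
`n ≥ 2`.
-/

open Polynomial Matrix Sum

section FieldTheory

variable {F E : Type*} [Field F] [Field E] [Algebra F E]

theorem FiniteDimensional.of_forall_natDegree_minpoly_le [Algebra.IsSeparable F E] (N : ℕ)
    (h : ∀ x : E, (minpoly F x).natDegree ≤ N) : FiniteDimensional F E := by
  have hrank : Module.rank F E ≤ N := by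
    refine rank_le fun s hs => ?_
    let K := IntermediateField.adjoin F (s : Set E)
    have : FiniteDimensional F K :=
      IntermediateField.finiteDimensional_adjoin fun x _ => Algebra.IsSeparable.isIntegral F x
    obtain ⟨γ, hγ⟩ := Field.exists_primitive_element F K
    have hK : Module.finrank F K ≤ N := by
      rw [← IntermediateField.finrank_top', ← hγ, IntermediateField.adjoin.finrank (.of_finite F γ),
        ← minpoly.algebraMap_eq (algebraMap K E).injective]
      exact h _
    have hsK : LinearIndependent F
        (fun x : s => (⟨x, IntermediateField.subset_adjoin F _ x.2⟩ : K)) :=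
      LinearIndependent.of_comp K.val.toLinearMap hs
    simpa using hsK.fintype_card_le_finrank.trans hK
  exact Module.rank_lt_aleph0_iff.mp (hrank.trans_lt Cardinal.natCast_lt_aleph0)

theorem exists_lt_natDegree_minpoly_of_not_perfectField [IsAlgClosed E] (hF : ¬ PerfectField F)
    (N : ℕ) : ∃ x : E, N < (minpoly F x).natDegree := by
  obtain ⟨q, hq⟩ := ExpChar.exists F
  rcases hq with _ | ⟨hq⟩
  · exact (hF inferInstance).elim
  have : ExpChar F q := ExpChar.prime hq
  obtain ⟨a, ha⟩ : ∃ a : F, ∀ b : F, b ^ q ≠ a := by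
    by_contra! hsurj
    have : PerfectRing F q := PerfectRing.ofSurjective F q hsurj
    exact hF (PerfectRing.toPerfectField F q)
  obtain ⟨x, hx⟩ := IsAlgClosed.exists_pow_nat_eq (algebraMap F E a) (pow_pos hq.pos N)
  obtain ⟨m, y, hmin⟩ := (minpoly.natSepDegree_eq_one_iff_eq_X_pow_sub_C q).1 <|
    (minpoly.natSepDegree_eq_one_iff_pow_mem q).2 ⟨N, a, hx.symm⟩
  have hxy : x ^ q ^ m = algebraMap F E y := by
    simpa [hmin, sub_eq_zero] using minpoly.aeval F x
  refine ⟨x, ?_⟩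
  rw [hmin, natDegree_X_pow_sub_C]
  by_contra! hmN
  have hmN : m < N :=
    (Nat.pow_lt_pow_iff_right hq.one_lt).1 (hmN.trans_lt (N.lt_pow_self hq.one_lt))
  -- otherwise `a = y ^ q ^ (N - m)` would be a `q`-th power
  apply ha (y ^ q ^ (N - m - 1))
  apply (algebraMap F E).injective
  rw [← hx, map_pow, map_pow, ← hxy, ← pow_mul, ← pow_mul, ← pow_succ, ← pow_add]
  congr 2
  omega

theorem exists_forall_aeval_ne_zero_of_natDegree_le [IsAlgClosed E]
    (hinf : ¬ FiniteDimensional F E) (N : ℕ) :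
    ∃ θ : E, ∀ p : F[X], p ≠ 0 → p.natDegree ≤ N → aeval θ p ≠ 0 := by
  by_contra! h
  have : Algebra.IsIntegral F E := ⟨fun θ =>
    let ⟨p, hp, _, hpθ⟩ := h θ
    IsAlgebraic.isIntegral ⟨p, hp, hpθ⟩⟩
  have hdeg (θ : E) : (minpoly F θ).natDegree ≤ N :=
    let ⟨p, hp, hpN, hpθ⟩ := h θ
    (natDegree_le_of_dvd (minpoly.dvd F θ hpθ) hp).trans hpN
  by_cases hF : PerfectField F
  · exact hinf (.of_forall_natDegree_minpoly_le N hdeg)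
  · obtain ⟨x, hx⟩ := exists_lt_natDegree_minpoly_of_not_perfectField (E := E) hF N
    exact (hdeg x).not_gt hx

end FieldTheory

namespace Nat

theorem log_pow_add_pow {b : ℕ} (hb : 3 ≤ b) (u v : ℕ) :
    log b (b ^ u + b ^ v) = max u v := by
  wlog huv : u ≤ v generalizing u v
  · rw [add_comm, max_comm]; exact this v u (by omega)
  rw [max_eq_right huv]
  have hpow : b ^ u ≤ b ^ v := Nat.pow_le_pow_right (by omega) huv
  refine log_eq_of_pow_le_of_lt_pow (by omega) ?_
  calc b ^ u + b ^ v ≤ 2 * b ^ v := by omega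
    _ < b ^ (v + 1) := by
      have : 0 < b ^ v := by positivity
      rw [pow_succ]; nlinarith

theorem pow_add_pow_ne_pow {b : ℕ} (hb : 3 ≤ b) (u v w : ℕ) : b ^ u + b ^ v ≠ b ^ w := by
  intro h
  have hlog := congrArg (log b) h
  rw [log_pow_add_pow hb, log_pow (by omega)] at hlog
  have : 0 < b ^ min u v := by positivity
  rcases le_total u v with huv | huv <;> simp_all

theorem pow_add_pow_eq_pow_add_pow {b : ℕ} (hb : 3 ≤ b) {u v x y : ℕ}
    (h : b ^ u + b ^ v = b ^ x + b ^ y) : u = x ∧ v = y ∨ u = y ∧ v = x := by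
  have hmax := congrArg (log b) h
  rw [log_pow_add_pow hb, log_pow_add_pow hb] at hmax
  have hmin : b ^ min u v = b ^ min x y := by
    rcases le_total u v with h1 | h1 <;> rcases le_total x y with h2 | h2 <;>
      simp only [h1, h2, min_eq_left, min_eq_right, max_eq_left, max_eq_right] at hmax ⊢ <;>
      subst hmax <;> omega
  have := Nat.pow_right_injective (le_of_lt (by omega : 2 < b)) hmin
  omega

end Nat

structure IsSidonExponents {κ : Type*} (e : κ → ℕ) : Prop where
  ne_zero : ∀ x, e x ≠ 0
  injective : Function.Injective e
  add_ne : ∀ x y z, e x + e y ≠ e z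
  add_eq_add : ∀ {x y x' y'}, e x + e y = e x' + e y' → x = x' ∧ y = y' ∨ x = y' ∧ y = x'

theorem isSidonExponents_pow {κ : Type*} {b : ℕ} (hb : 3 ≤ b) {E : κ → ℕ}
    (hE : Function.Injective E) : IsSidonExponents fun x => b ^ E x where
  ne_zero x := by positivity
  injective := (Nat.pow_right_injective (by omega)).comp hE
  add_ne x y z := Nat.pow_add_pow_ne_pow hb _ _ _
  add_eq_add h := by
    rcases Nat.pow_add_pow_eq_pow_add_pow hb h with ⟨h1, h2⟩ | ⟨h1, h2⟩
    · exact .inl ⟨hE h1, hE h2⟩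
    · exact .inr ⟨hE h1, hE h2⟩

theorem IsSidonExponents.entries_of_eq {σ τ R : Type*} [Fintype σ] [Fintype τ] [Semiring R]
    {e : τ × σ → ℕ} (he : IsSidonExponents e) (A : Matrix (σ ⊕ τ) (σ ⊕ τ) R) (i : τ) (a : σ)
    (h : C (A (inr i) (inl a)) + ∑ j, C (A (inr i) (inr j)) * X ^ e (j, a) =
      ∑ b, C (A (inl b) (inl a)) * X ^ e (i, b) +
        ∑ b, ∑ j, C (A (inl b) (inr j)) * X ^ (e (i, b) + e (j, a))) :
    A (inr i) (inl a) = 0 ∧ (∀ b j, A (inl b) (inr j) = 0) ∧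
      (∀ b, b ≠ a → A (inl b) (inl a) = 0) ∧ (∀ j, j ≠ i → A (inr i) (inr j) = 0) ∧
      A (inr i) (inr i) = A (inl a) (inl a) := by
  classical
  have hcoeff n := congrArg (coeff · n) h
  simp only [coeff_add, finsetSum_coeff, coeff_C_mul_X_pow, coeff_C] at hcoeff
  have hinj := @he.injective.eq_iff
  have hzero : ∀ x, 0 ≠ e x := fun x => (he.ne_zero x).symm
  have hsum : ∀ x y z, e z ≠ e x + e y := fun x y z => (he.add_ne x y z).symm
  have hzero_sum : ∀ x y, 0 ≠ e x + e y := fun x y => by have := he.ne_zero x; omega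
  refine ⟨?_, ?_, ?_, ?_, ?_⟩
  · simpa [hzero, hzero_sum] using hcoeff 0
  · intro b j
    have key : ∀ b' j', e (i, b) + e (j, a) = e (i, b') + e (j', a) ↔ b = b' ∧ j = j' := by
      intro b' j'
      constructor
      · intro h'
        rcases he.add_eq_add h' with ⟨h1, h2⟩ | ⟨h1, h2⟩ <;> simp_all
      · rintro ⟨rfl, rfl⟩; rfl
    simpa [he.ne_zero, he.add_ne, key, ite_and] using (hcoeff (e (i, b) + e (j, a))).symm
  · intro b hb
    simpa [he.ne_zero, hsum, hinj, hb] using (hcoeff (e (i, b))).symm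
  · intro j hj
    simpa [he.ne_zero, hsum, hinj, hj] using hcoeff (e (j, a))
  · simpa [he.ne_zero, hsum, hinj] using hcoeff (e (i, a))

theorem Matrix.vecMulVec_eq_zero_of_eq_smul_one {ι R : Type*} [DecidableEq ι] [CommRing R]
    [NoZeroDivisors R] [Nontrivial ι] {u w : ι → R} {c : R} (h : vecMulVec u w = c • 1) :
    vecMulVec u w = 0 := by
  obtain ⟨i, j, hij⟩ := exists_pair_ne ι
  have entry s t : u s * w t = if s = t then c else 0 := by
    simpa [vecMulVec_apply, Matrix.one_apply] using congrFun (congrFun h s) t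
  have hc : c * c = 0 := by
    calc c * c = (u i * w i) * (u j * w j) := by simp [entry]
      _ = (u i * w j) * (u j * w i) := by ring
      _ = 0 := by simp [entry, hij]
  rw [h, mul_self_eq_zero.1 hc, zero_smul]

section Stabilizer

variable (k₀ : Type*) {k ι : Type*} [Field k₀] [Field k] [Algebra k₀ k] [Fintype ι]

def matrixStabilizer (W : Submodule k (ι → k)) : Set (Matrix ι ι k₀) :=
  {A | ∀ x ∈ W, (A.map (algebraMap k₀ k)) *ᵥ x ∈ W}

variable {k₀}

theorem smul_one_mem_matrixStabilizer [DecidableEq ι] (W : Submodule k (ι → k)) (c : k₀) :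
    c • (1 : Matrix ι ι k₀) ∈ matrixStabilizer k₀ W := by
  intro x hx
  have : (c • (1 : Matrix ι ι k₀)).map (algebraMap k₀ k) = algebraMap k₀ k c • 1 := by
    ext i j; by_cases h : i = j <;> simp [h]
  rw [this, smul_mulVec, one_mulVec]
  exact W.smul_mem _ hx

theorem map_vecMulVec_mulVec (u w : ι → k₀) (x : ι → k) :
    (vecMulVec u w).map (algebraMap k₀ k) *ᵥ x =
      ((algebraMap k₀ k ∘ w) ⬝ᵥ x) • (algebraMap k₀ k ∘ u) := by
  ext i
  simp [mulVec, dotProduct, vecMulVec_apply, Finset.mul_sum, mul_comm, mul_left_comm]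

theorem reindex_mem_matrixStabilizer {κ : Type*} [Fintype κ] (e : ι ≃ κ)
    {W : Submodule k (κ → k)} {A : Matrix ι ι k₀}
    (hA : A ∈ matrixStabilizer k₀ (W.map (LinearEquiv.funCongrLeft k k e : (κ → k) →ₗ[k] ι → k))) :
    reindex e e A ∈ matrixStabilizer k₀ W := by
  intro x hx
  obtain ⟨y, hy, hyx⟩ := hA _ (Submodule.mem_map_of_mem hx)
  suffices (reindex e e A).map (algebraMap k₀ k) *ᵥ x = y by rwa [this]
  rw [reindex_apply, ← submatrix_map, submatrix_mulVec_equiv, Equiv.symm_symm]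
  ext s
  have := congrFun hyx (e.symm s)
  simp only [LinearEquiv.coe_coe, LinearEquiv.funCongrLeft_apply, LinearMap.funLeft_apply,
    Equiv.apply_symm_apply] at this
  exact this.symm

variable [DecidableEq ι] {W : Submodule k (ι → k)} [Nontrivial ι]
  (hW : matrixStabilizer k₀ W ⊆ {A | ∃ c : k₀, A = c • 1})
include hW

theorem eq_zero_of_mem_of_forall_mem_range {x : ι → k} (hx : x ∈ W)
    (hrange : ∀ i, x i ∈ (algebraMap k₀ k).range) : x = 0 := by
  choose u hu using hrange
  have hxu : x = algebraMap k₀ k ∘ u := funext fun i => (hu i).symm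
  obtain ⟨j⟩ : Nonempty ι := inferInstance
  have hstab : vecMulVec u (Pi.single j 1) ∈ matrixStabilizer k₀ W := fun y _ => by
    rw [map_vecMulVec_mulVec, ← hxu]; exact W.smul_mem _ hx
  obtain ⟨c, hc⟩ := hW hstab
  have hu0 : u = 0 := by
    simpa using vecMulVec_eq_zero_of_eq_smul_one hc
  rw [hxu, hu0]; ext; simp

theorem not_le_span_map_of_ne_top {U : Submodule k₀ (ι → k₀)} (hU : U ≠ ⊤) :
    ¬ W ≤ Submodule.span k ((fun u i => algebraMap k₀ k (u i)) '' (U : Set (ι → k₀))) := by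
  intro hle
  obtain ⟨f, hf0, hUf⟩ := U.exists_le_ker_of_lt_top (lt_top_iff_ne_top.2 hU)
  set c := (dotProductEquiv k₀ ι).symm f
  have hc0 : c ≠ 0 := by simpa [c] using hf0
  have hcU : ∀ u ∈ U, c ⬝ᵥ u = 0 := fun u hu => by
    simpa [c, ← dotProductEquiv_apply_apply] using hUf hu
  have hWker : W ≤ LinearMap.ker (dotProductEquiv k ι (algebraMap k₀ k ∘ c)) := by
    refine hle.trans (Submodule.span_le.2 ?_)
    rintro _ ⟨u, hu, rfl⟩
    change (algebraMap k₀ k ∘ c) ⬝ᵥ (algebraMap k₀ k ∘ u) = 0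
    rw [← RingHom.map_dotProduct, hcU u hu, map_zero]
  obtain ⟨i⟩ : Nonempty ι := inferInstance
  have hstab : vecMulVec (Pi.single i 1) c ∈ matrixStabilizer k₀ W := fun y hy => by
    have : (algebraMap k₀ k ∘ c) ⬝ᵥ y = 0 := hWker hy
    rw [map_vecMulVec_mulVec, this, zero_smul]; exact W.zero_mem
  obtain ⟨a, ha⟩ := hW hstab
  simpa [hc0] using vecMulVec_eq_zero_of_eq_smul_one ha

end Stabilizer

section Graph

variable {K σ τ : Type*} [CommSemiring K] [Fintype σ]

def Matrix.graphLin (M : Matrix τ σ K) : (σ → K) →ₗ[K] (σ ⊕ τ → K) where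
  toFun u := Sum.elim u (M *ᵥ u)
  map_add' u v := by ext (_ | _) <;> simp [mulVec_add]
  map_smul' c u := by ext (_ | _) <;> simp [mulVec_smul]

theorem Matrix.graphLin_injective (M : Matrix τ σ K) : Function.Injective M.graphLin :=
  fun _ _ h => funext fun b => congrFun h (inl b)

theorem Matrix.mulVec_graphLin_single [Fintype τ] [DecidableEq σ] (M : Matrix τ σ K)
    (B : Matrix (σ ⊕ τ) (σ ⊕ τ) K) (a : σ) (s : σ ⊕ τ) :
    (B *ᵥ M.graphLin (Pi.single a 1)) s = B s (inl a) + ∑ j, B s (inr j) * M j a := by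
  simp [graphLin, mulVec, dotProduct, Fintype.sum_sum_type, Pi.single_apply]

theorem Matrix.graph_stabilizer_identity [Fintype τ] [DecidableEq σ] (M : Matrix τ σ K)
    (B : Matrix (σ ⊕ τ) (σ ⊕ τ) K)
    (hB : ∀ x ∈ LinearMap.range M.graphLin, B *ᵥ x ∈ LinearMap.range M.graphLin) (i : τ) (a : σ) :
    B (inr i) (inl a) + ∑ j, B (inr i) (inr j) * M j a =
      ∑ b, M i b * (B (inl b) (inl a) + ∑ j, B (inl b) (inr j) * M j a) := by
  obtain ⟨u, hu⟩ := hB _ (LinearMap.mem_range_self _ (Pi.single a 1))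
  have hinl b : u b = B (inl b) (inl a) + ∑ j, B (inl b) (inr j) * M j a := by
    rw [← mulVec_graphLin_single, ← hu]; rfl
  rw [← mulVec_graphLin_single, ← hu]
  simp [graphLin, mulVec, dotProduct, hinl]

end Graph

theorem Matrix.exists_eq_smul_one_of_forall {ι R : Type*} [DecidableEq ι] [Semiring R]
    [Nonempty ι] {A : Matrix ι ι R} (hoff : ∀ s t, s ≠ t → A s t = 0)
    (hdiag : ∀ s t, A s s = A t t) : ∃ c : R, A = c • 1 := by
  obtain ⟨s₀⟩ := ‹Nonempty ι›
  refine ⟨A s₀ s₀, ext fun s t => ?_⟩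
  by_cases hst : s = t
  · subst hst; simp [hdiag s s₀]
  · simp [hoff s t hst, hst]

theorem Matrix.exists_eq_smul_one_of_sum {σ τ R : Type*} [DecidableEq σ] [DecidableEq τ]
    [Semiring R] [Nonempty σ] [Nonempty τ] {A : Matrix (σ ⊕ τ) (σ ⊕ τ) R}
    (h : ∀ i a, A (inr i) (inl a) = 0 ∧ (∀ b j, A (inl b) (inr j) = 0) ∧
      (∀ b, b ≠ a → A (inl b) (inl a) = 0) ∧ (∀ j, j ≠ i → A (inr i) (inr j) = 0) ∧
      A (inr i) (inr i) = A (inl a) (inl a)) :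
    ∃ c : R, A = c • 1 := by
  obtain ⟨a₀⟩ := ‹Nonempty σ›
  obtain ⟨i₀⟩ := ‹Nonempty τ›
  refine exists_eq_smul_one_of_forall ?_ fun s t => ?_
  · rintro (b | i) (a | j) hst
    · exact (h i₀ a).2.2.1 b (by simpa using hst)
    · exact (h i₀ a₀).2.1 b j
    · exact (h i a).1
    · exact (h i a₀).2.2.2.1 j (by simpa [eq_comm] using hst)
  · have hconst : ∀ s, A s s = A (inl a₀) (inl a₀) := by
      rintro (a | i)
      · rw [← (h i₀ a).2.2.2.2, (h i₀ a₀).2.2.2.2]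
      · exact (h i a₀).2.2.2.2
    rw [hconst s, hconst t]

section Construction

variable {k₀ k σ τ : Type*} [Field k₀] [Field k] [Algebra k₀ k] [Fintype σ] [Fintype τ]

theorem polynomial_identity_of_aeval_eq {e : τ × σ → ℕ} {N : ℕ} (he : ∀ x, e x ≤ N) {θ : k}
    (hθ : ∀ p : k₀[X], p ≠ 0 → p.natDegree ≤ 2 * N → aeval θ p ≠ 0)
    (A : Matrix (σ ⊕ τ) (σ ⊕ τ) k₀) (i : τ) (a : σ)
    (h : algebraMap k₀ k (A (inr i) (inl a)) +
        ∑ j, algebraMap k₀ k (A (inr i) (inr j)) * θ ^ e (j, a) =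
      ∑ b, θ ^ e (i, b) * (algebraMap k₀ k (A (inl b) (inl a)) +
        ∑ j, algebraMap k₀ k (A (inl b) (inr j)) * θ ^ e (j, a))) :
    C (A (inr i) (inl a)) + ∑ j, C (A (inr i) (inr j)) * X ^ e (j, a) =
      ∑ b, C (A (inl b) (inl a)) * X ^ e (i, b) +
        ∑ b, ∑ j, C (A (inl b) (inr j)) * X ^ (e (i, b) + e (j, a)) := by
  by_contra hne
  refine hθ _ (sub_ne_zero.2 hne) ?_ ?_
  · have hterm (c : k₀) {n : ℕ} (hn : n ≤ 2 * N) : (C c * X ^ n).natDegree ≤ 2 * N :=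
      (natDegree_C_mul_X_pow_le c n).trans hn
    refine (natDegree_sub_le _ _).trans (max_le ((natDegree_add_le _ _).trans (max_le ?_ ?_))
      ((natDegree_add_le _ _).trans (max_le ?_ ?_)))
    · simp
    all_goals
      refine natDegree_sum_le_of_forall_le _ _ fun b _ => ?_
    · exact hterm _ (by linarith [he (b, a)])
    · exact hterm _ (by linarith [he (i, b)])
    · exact natDegree_sum_le_of_forall_le _ _ fun j _ =>
        hterm _ (by linarith [he (i, b), he (j, a)])
  · rw [map_sub, sub_eq_zero]
    simp only [map_add, map_sum, map_mul, aeval_C, map_pow, aeval_X, h, mul_add, Finset.mul_sum,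
      Finset.sum_add_distrib, pow_add]
    congr 1
    · exact Finset.sum_congr rfl fun b _ => mul_comm _ _
    · exact Finset.sum_congr rfl fun b _ => Finset.sum_congr rfl fun j _ => by ring

theorem exists_finrank_eq_card_and_matrixStabilizer_subset [IsAlgClosed k] [DecidableEq σ]
    [DecidableEq τ] [Nonempty σ] [Nonempty τ] (hinf : ¬ FiniteDimensional k₀ k) :
    ∃ W : Submodule k (σ ⊕ τ → k), Module.finrank k W = Fintype.card σ ∧
      matrixStabilizer k₀ W ⊆ {A | ∃ c : k₀, A = c • 1} := by
  let E := Fintype.equivFin (τ × σ)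
  let e x := 3 ^ (E x : ℕ)
  have he : IsSidonExponents e := isSidonExponents_pow le_rfl (Fin.val_injective.comp E.injective)
  have he_le x : e x ≤ 3 ^ Fintype.card (τ × σ) := Nat.pow_le_pow_right (by norm_num) (E x).isLt.le
  obtain ⟨θ, hθ⟩ := exists_forall_aeval_ne_zero_of_natDegree_le hinf (2 * 3 ^ Fintype.card (τ × σ))
  let M : Matrix τ σ k := of fun i b => θ ^ e (i, b)
  refine ⟨LinearMap.range M.graphLin, ?_, fun A hA => ?_⟩
  · rw [LinearMap.finrank_range_of_inj M.graphLin_injective, Module.finrank_fintype_fun_eq_card]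
  · exact exists_eq_smul_one_of_sum fun i a => he.entries_of_eq A i a <|
      polynomial_identity_of_aeval_eq he_le hθ A i a (M.graph_stabilizer_identity _ hA i a)

end Construction

theorem exists_finrank_eq_and_matrixStabilizer_eq {k₀ k ι : Type*} [Field k₀] [Field k]
    [IsAlgClosed k] [Algebra k₀ k] [Fintype ι] [DecidableEq ι] (hinf : ¬ FiniteDimensional k₀ k)
    {r : ℕ} (hr : 0 < r) (hrι : r < Fintype.card ι) :
    ∃ W : Submodule k (ι → k), Module.finrank k W = r ∧
      matrixStabilizer k₀ W = {A | ∃ c : k₀, A = c • 1} := by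
  let e : ι ≃ Fin r ⊕ Fin (Fintype.card ι - r) := Fintype.equivOfCardEq (by simp; omega)
  have : Nonempty (Fin r) := ⟨⟨0, hr⟩⟩
  have : Nonempty (Fin (Fintype.card ι - r)) := ⟨⟨0, by omega⟩⟩
  obtain ⟨W, hWr, hW⟩ := exists_finrank_eq_card_and_matrixStabilizer_subset
    (σ := Fin r) (τ := Fin (Fintype.card ι - r)) hinf
  refine ⟨W.map (LinearEquiv.funCongrLeft k k e : (Fin r ⊕ _ → k) →ₗ[k] ι → k), ?_, ?_⟩
  · rw [LinearEquiv.finrank_map_eq, hWr, Fintype.card_fin]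
  · refine subset_antisymm (fun A hA => ?_) ?_
    · obtain ⟨c, hc⟩ := hW (reindex_mem_matrixStabilizer e hA)
      exact ⟨c, (reindex e e).injective (by simp [hc, submatrix_smul, submatrix_one_equiv])⟩
    · rintro _ ⟨c, rfl⟩
      exact smul_one_mem_matrixStabilizer _ c

/-- Let `k₀` be a field and `k` an algebraically closed field such that the extension
`k/k₀` is infinite, and let `0 < r < n`.  Then there exists an `r`-dimensional `k`-subspace
`W ⊆ k^n` such that the only matrices with entries in `k₀` preserving `W` are the scalar
matrices.  Moreover, every `r`-dimensional `k`-subspace `W ⊆ k^n` whose `k₀`-stabilizer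
consists only of scalar matrices is `k₀`-null (`W ∩ k₀^n = 0`) and `k₀`-dense (`W` is not
contained in `U ⊗_{k₀} k` for any proper `k₀`-subspace `U ⊊ k₀^n`). -/
theorem exists_subspace_with_scalar_stabilizer
    (k₀ k : Type*) [Field k₀] [Field k] [IsAlgClosed k] [Algebra k₀ k]
    (hinf : ¬ FiniteDimensional k₀ k)
    (n r : ℕ) (hr : 0 < r) (hrn : r < n) :
    (∃ W : Submodule k (Fin n → k), Module.finrank k W = r ∧
      {A : Matrix (Fin n) (Fin n) k₀ |
          ∀ x ∈ W, (A.map (algebraMap k₀ k)).mulVec x ∈ W} =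
        {A : Matrix (Fin n) (Fin n) k₀ | ∃ a : k₀, A = a • (1 : Matrix (Fin n) (Fin n) k₀)}) ∧
    (∀ W : Submodule k (Fin n → k), Module.finrank k W = r →
      {A : Matrix (Fin n) (Fin n) k₀ |
          ∀ x ∈ W, (A.map (algebraMap k₀ k)).mulVec x ∈ W} =
        {A : Matrix (Fin n) (Fin n) k₀ | ∃ a : k₀, A = a • (1 : Matrix (Fin n) (Fin n) k₀)} →
      (∀ x ∈ W, (∀ i : Fin n, x i ∈ (algebraMap k₀ k).range) → x = 0) ∧
      (∀ U : Submodule k₀ (Fin n → k₀), U ≠ ⊤ →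
        ¬ W ≤ Submodule.span k
          ((fun u : Fin n → k₀ => fun i => algebraMap k₀ k (u i)) '' (U : Set (Fin n → k₀))))) := by
  have : Nontrivial (Fin n) := Fin.nontrivial_iff_two_le.2 (by omega)
  refine ⟨exists_finrank_eq_and_matrixStabilizer_eq hinf hr (by simpa using hrn), fun W _ hW => ?_⟩
  exact ⟨fun x hx => eq_zero_of_mem_of_forall_mem_range hW.subset hx,
    fun U hU => not_le_span_map_of_ne_top hW.subset hU⟩
end

section
/- Let k0 be a field, k an algebraically closed field containing k0, and equip V0 = k0^{2r} with the standard symplectic form ψ0 given by the matrix J = [[0, I_r],[−I_r, 0]] in the basis e_1,…,e_r, e'_1,…,e'_r. Let H ⊆ Sp(V0) be the subgroup generated by the elements ε_i (1 ≤ i ≤ r), defined by ε_i(e_i) = e'_i, ε_i(e'_i) = −e_i and ε_i fixing all other basis vectors, together with the permutation elements σ ∈ S_r acting by σ(e_i) = e_{σ(i)}, σ(e'_i) = e'_{σ(i)}. Then for every maximal isotropic (r-dimensional, totally isotropic for the k-bilinear extension of ψ0) k-subspace W ⊆ k^{2r}, there exists γ ∈ H such that the projection of γ·W onto the first r coordinates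 is an isomorphism of k-vector spaces. -/
/-- The matrix of the symplectic transformation `ε_i` sending `e_i ↦ e'_i`, `e'_i ↦ −e_i`
and fixing all other basis vectors, where `e_i = inl i` and `e'_i = inr i`. -/
def epsMat (k₀ : Type*) [Field k₀] (r : ℕ) (i : Fin r) :
    Matrix (Fin r ⊕ Fin r) (Fin r ⊕ Fin r) k₀ :=
  Matrix.of fun a b =>
    if a = Sum.inl i ∧ b = Sum.inr i then -1
    else if a = Sum.inr i ∧ b = Sum.inl i then 1
    else if a = b ∧ a ≠ Sum.inl i ∧ a ≠ Sum.inr i then 1 else 0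

/-- The permutation matrix of `σ ∈ S_r` acting by `e_i ↦ e_{σ(i)}` and `e'_i ↦ e'_{σ(i)}`. -/
def permMat (k₀ : Type*) [Field k₀] (r : ℕ) (σ : Equiv.Perm (Fin r)) :
    Matrix (Fin r ⊕ Fin r) (Fin r ⊕ Fin r) k₀ :=
  Matrix.of fun a b => if a = Equiv.sumCongr σ σ b then 1 else 0

/-- The subgroup `H = ⟨ε_1, …, ε_r⟩ · S_r` of `GL_{2r}(k₀)` generated by the `ε_i` and the
permutation matrices. -/
def weylSubgroup (k₀ : Type*) [Field k₀] (r : ℕ) :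
    Subgroup (Matrix (Fin r ⊕ Fin r) (Fin r ⊕ Fin r) k₀)ˣ :=
  Subgroup.closure
    {γ : (Matrix (Fin r ⊕ Fin r) (Fin r ⊕ Fin r) k₀)ˣ |
      (∃ i : Fin r, (γ : Matrix (Fin r ⊕ Fin r) (Fin r ⊕ Fin r) k₀) = epsMat k₀ r i) ∨
      (∃ σ : Equiv.Perm (Fin r),
        (γ : Matrix (Fin r ⊕ Fin r) (Fin r ⊕ Fin r) k₀) = permMat k₀ r σ)}


/-!
Let `S` be a set of indices such that restricting to the coordinates `e'_i`, `i ∈ S`, is an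
isomorphism from `W ∩ ⟨e'_1, …, e'_r⟩` onto `k^S` (a maximal `S` onto which the restriction is
surjective works), and let `γ = ∏_{i ∈ S} ε_i`. If `v ∈ W` and `γ v` has vanishing first half,
then `v` vanishes at `e'_i` for `i ∈ S` and at `e_i` for `i ∉ S`; pairing `v` with the vector of
`W ∩ ⟨e'_1, …, e'_r⟩` that is `δ_j` on `S` shows that it also vanishes at `e_j` for `j ∈ S`, and
then `v = 0` by the choice of `S`. So the projection of `γ W` is injective, hence bijective since
`dim W = r`.
-/

open Sum Matrix

theorem Submodule.exists_finset_restrict_surjective_injective {K ι : Type*} [Field K] [Finite ι]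
    (A : Submodule K (ι → K)) :
    ∃ S : Finset ι, (∀ c : ι → K, ∃ x ∈ A, ∀ i ∈ S, x i = c i) ∧
      ∀ x ∈ A, (∀ i ∈ S, x i = 0) → x = 0 := by
  classical
  obtain ⟨S, -, hS⟩ := Finite.exists_le_maximal
    (p := fun S : Finset ι => ∀ c : ι → K, ∃ x ∈ A, ∀ i ∈ S, x i = c i)
    (a := ∅) (fun c => ⟨0, A.zero_mem, by simp⟩)
  refine ⟨S, hS.prop, fun x hx hxS => ?_⟩
  by_contra hx0
  obtain ⟨j, hj⟩ : ∃ j, x j ≠ 0 := Function.ne_iff.mp hx0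
  have hjS : j ∉ S := fun h => hj (hxS j h)
  -- adjusting a solution on `S` by a multiple of `x` also prescribes the `j`-coordinate
  have hins : ∀ c : ι → K, ∃ y ∈ A, ∀ i ∈ insert j S, y i = c i := by
    intro c
    obtain ⟨y, hy, hyS⟩ := hS.prop c
    refine ⟨y + ((c j - y j) / x j) • x, A.add_mem hy (A.smul_mem _ hx), ?_⟩
    simp only [Finset.mem_insert, forall_eq_or_imp, Pi.add_apply, Pi.smul_apply, smul_eq_mul]
    refine ⟨by rw [div_mul_cancel₀ _ hj]; ring, fun i hi => by simp [hyS i hi, hxS i hi]⟩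
  exact hjS (hS.le_of_ge hins (Finset.subset_insert j S) (Finset.mem_insert_self j S))

theorem Submodule.exists_finset_inr_restrict_bijective_of_inl_eq_zero {K ι κ : Type*} [Field K]
    [Finite κ] (W : Submodule K (ι ⊕ κ → K)) :
    ∃ S : Finset κ,
      (∀ c : κ → K, ∃ u ∈ W, (∀ j, u (inl j) = 0) ∧ ∀ i ∈ S, u (inr i) = c i) ∧
      ∀ u ∈ W, (∀ j, u (inl j) = 0) → (∀ i ∈ S, u (inr i) = 0) → u = 0 := by
  obtain ⟨S, hsurj, hinj⟩ := Submodule.exists_finset_restrict_surjective_injective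
    ((W ⊓ LinearMap.ker (LinearMap.funLeft K K inl)).map (LinearMap.funLeft K K inr))
  refine ⟨S, fun c => ?_, fun u hu hul huS => ?_⟩
  · obtain ⟨_, ⟨u, ⟨hu, hul⟩, rfl⟩, huS⟩ := hsurj c
    exact ⟨u, hu, fun j => congrFun hul j, huS⟩
  · have hur := hinj (u ∘ inr) ⟨u, ⟨hu, funext hul⟩, rfl⟩ huS
    funext a
    cases a with
    | inl j => exact hul j
    | inr i => exact congrFun hur i

section FlipVec

variable {R ι : Type*} [DecidableEq ι]

def flipVec [Neg R] (S : Finset ι) (y : ι ⊕ ι → R) : ι ⊕ ι → R :=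
  Sum.elim (fun i => if i ∈ S then -y (inr i) else y (inl i))
    (fun i => if i ∈ S then y (inl i) else y (inr i))

@[simp]
lemma flipVec_empty [Neg R] (y : ι ⊕ ι → R) : flipVec ∅ y = y := by
  funext a; cases a <;> simp [flipVec]

lemma flipVec_singleton_flipVec [Neg R] {i : ι} {S : Finset ι} (hi : i ∉ S) (y : ι ⊕ ι → R) :
    flipVec {i} (flipVec S y) = flipVec (insert i S) y := by
  funext a
  cases a with
  | inl j => by_cases hj : j = i <;> simp_all [flipVec]
  | inr j => by_cases hj : j = i <;> simp_all [flipVec]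

lemma flipVec_injective [InvolutiveNeg R] (S : Finset ι) :
    Function.Injective (flipVec (R := R) S) := by
  intro y z h
  funext a
  have hl := fun i => congrFun h (inl i)
  have hr := fun i => congrFun h (inr i)
  cases a with
  | inl i =>
    by_cases hi : i ∈ S
    · simpa [flipVec, hi] using hr i
    · simpa [flipVec, hi] using hl i
  | inr i =>
    by_cases hi : i ∈ S
    · simpa [flipVec, hi] using hl i
    · simpa [flipVec, hi] using hr i

end FlipVec

section Eps

variable {F : Type*} [Field F] {r : ℕ}

lemma epsMat_mulVec (i : Fin r) (y : Fin r ⊕ Fin r → F) :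
    epsMat F r i *ᵥ y = flipVec {i} y := by
  funext a
  cases a with
  | inl j => by_cases hj : j = i <;> simp [epsMat, flipVec, mulVec, dotProduct, hj, ite_mul]
  | inr j => by_cases hj : j = i <;> simp [epsMat, flipVec, mulVec, dotProduct, hj, ite_mul]

lemma list_prod_epsMat_mulVec {l : List (Fin r)} (hl : l.Nodup) (y : Fin r ⊕ Fin r → F) :
    (l.map (epsMat F r)).prod *ᵥ y = flipVec l.toFinset y := by
  induction l with
  | nil => simp
  | cons i l ih =>
    obtain ⟨hil, hl⟩ := List.nodup_cons.mp hl
    rw [List.map_cons, List.prod_cons, ← mulVec_mulVec, ih hl, epsMat_mulVec,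
      flipVec_singleton_flipVec (by simpa using hil), List.toFinset_cons]

lemma isUnit_epsMat (i : Fin r) : IsUnit (epsMat F r i) := by
  rw [← mulVec_injective_iff_isUnit, funext (epsMat_mulVec i)]
  exact flipVec_injective _

lemma epsMat_map {k : Type*} [Field k] (φ : F →+* k) (i : Fin r) :
    (epsMat F r i).map φ = epsMat k r i := by
  ext a b
  simp [epsMat, apply_ite φ]

variable (F r) in
noncomputable def flipUnit (S : Finset (Fin r)) : (Matrix (Fin r ⊕ Fin r) (Fin r ⊕ Fin r) F)ˣ :=
  (S.toList.map fun i => (isUnit_epsMat i).unit).prod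

lemma flipUnit_mem_weylSubgroup (S : Finset (Fin r)) : flipUnit F r S ∈ weylSubgroup F r :=
  list_prod_mem fun _ hγ => by
    obtain ⟨i, -, rfl⟩ := List.mem_map.mp hγ
    exact Subgroup.subset_closure (Or.inl ⟨i, rfl⟩)

lemma map_flipUnit_mulVec {k : Type*} [Field k] (φ : F →+* k) (S : Finset (Fin r))
    (y : Fin r ⊕ Fin r → k) :
    (flipUnit F r S : Matrix (Fin r ⊕ Fin r) (Fin r ⊕ Fin r) F).map φ *ᵥ y = flipVec S y := by
  have hcoe : ((flipUnit F r S : Matrix (Fin r ⊕ Fin r) (Fin r ⊕ Fin r) F)).map φ =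
      (S.toList.map (epsMat k r)).prod := by
    rw [flipUnit, ← Units.coeHom_apply, map_list_prod, ← RingHom.mapMatrix_apply, map_list_prod]
    simp [List.map_map, Function.comp_def, epsMat_map]
  rw [hcoe, list_prod_epsMat_mulVec S.nodup_toList, Finset.toList_toFinset]

end Eps

theorem eq_zero_of_flipVec_inl_eq_zero {K ι : Type*} [Field K] [Fintype ι] [DecidableEq ι]
    {W : Submodule K (ι ⊕ ι → K)}
    (hiso : ∀ x ∈ W, ∀ y ∈ W, ∑ i, (x (inl i) * y (inr i) - x (inr i) * y (inl i)) = 0)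
    {S : Finset ι}
    (hS_surj : ∀ c : ι → K, ∃ u ∈ W, (∀ j, u (inl j) = 0) ∧ ∀ i ∈ S, u (inr i) = c i)
    (hS_inj : ∀ u ∈ W, (∀ j, u (inl j) = 0) → (∀ i ∈ S, u (inr i) = 0) → u = 0)
    {v : ι ⊕ ι → K} (hv : v ∈ W) (hflip : ∀ j, flipVec S v (inl j) = 0) :
    v = 0 := by
  have hvr : ∀ i ∈ S, v (inr i) = 0 := fun i hi => by simpa [flipVec, hi] using hflip i
  have hvl_out : ∀ i ∉ S, v (inl i) = 0 := fun i hi => by simpa [flipVec, hi] using hflip i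
  refine hS_inj v hv (fun j => ?_) hvr
  by_cases hj : j ∈ S
  · obtain ⟨u, hu, hul, huS⟩ := hS_surj (Pi.single j 1)
    have hterm : ∀ i,
        v (inl i) * u (inr i) - v (inr i) * u (inl i) = if i = j then v (inl j) else 0 := by
      intro i
      by_cases hi : i ∈ S
      · by_cases hij : i = j
        · subst hij; simp [hul, huS i hi]
        · simp [hul, huS i hi, hij]
      · have hij : i ≠ j := fun h => hi (h ▸ hj)
        simp [hul, hvl_out i hi, hij]
    simpa [hterm] using hiso v hv u hu
  · exact hvl_out j hj

theorem exists_weyl_elt_projection_bijective_general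
    (k₀ k : Type*) [Field k₀] [Field k] [Algebra k₀ k]
    (r : ℕ) (W : Submodule k ((Fin r ⊕ Fin r) → k))
    (hrank : Module.finrank k W = r)
    (hiso : ∀ x ∈ W, ∀ y ∈ W,
      ∑ i : Fin r, (x (Sum.inl i) * y (Sum.inr i) - x (Sum.inr i) * y (Sum.inl i)) = 0) :
    ∃ γ ∈ weylSubgroup k₀ r, Function.Bijective
      ((LinearMap.funLeft k k Sum.inl).comp
        (Submodule.subtype (W.map
          (Matrix.mulVecLin
            (((γ : Matrix (Fin r ⊕ Fin r) (Fin r ⊕ Fin r) k₀)).map (algebraMap k₀ k)))))) := by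
  obtain ⟨S, hS_surj, hS_inj⟩ := W.exists_finset_inr_restrict_bijective_of_inl_eq_zero
  refine ⟨flipUnit k₀ r S, flipUnit_mem_weylSubgroup S, ?_⟩
  set M := (flipUnit k₀ r S : Matrix (Fin r ⊕ Fin r) (Fin r ⊕ Fin r) k₀).map (algebraMap k₀ k)
  have hM : ∀ v, M *ᵥ v = flipVec S v := map_flipUnit_mulVec _ S
  have hinj : Function.Injective
      ((LinearMap.funLeft k k inl).comp (W.map M.mulVecLin).subtype) := by
    rw [← LinearMap.ker_eq_bot, Submodule.eq_bot_iff]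
    rintro ⟨_, v, hv, rfl⟩ hx
    have hv0 : v = 0 := eq_zero_of_flipVec_inl_eq_zero hiso hS_surj hS_inj hv
      (fun j => by simpa [hM] using congrFun hx j)
    simp [hv0]
  have hM_inj : Function.Injective M.mulVecLin := by
    simpa [Matrix.coe_mulVecLin, funext hM] using flipVec_injective (R := k) S
  have hdim : Module.finrank k (W.map M.mulVecLin) = Module.finrank k (Fin r → k) := by
    rw [LinearEquiv.finrank_eq (Submodule.equivMapOfInjective _ hM_inj W).symm,
      hrank, Module.finrank_fin_fun]
  exact ⟨hinj, (LinearMap.injective_iff_surjective_of_finrank_eq_finrank hdim).mp hinj⟩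

/-- Let `k₀` be a field, `k` an algebraically closed field containing `k₀`, and equip
`k₀^{2r}` with the standard symplectic form given by `[[0, I_r], [−I_r, 0]]`.  For every
maximal isotropic (Lagrangian) `k`-subspace `W ⊆ k^{2r}` there exists `γ ∈ H` such that
the projection of `γ·W` onto the first `r` coordinates is an isomorphism of `k`-vector
spaces. -/
theorem exists_weyl_elt_projection_bijective
    (k₀ k : Type*) [Field k₀] [Field k] [IsAlgClosed k] [Algebra k₀ k]
    (r : ℕ) (W : Submodule k ((Fin r ⊕ Fin r) → k))
    (hrank : Module.finrank k W = r)
    (hiso : ∀ x ∈ W, ∀ y ∈ W,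
      ∑ i : Fin r, (x (Sum.inl i) * y (Sum.inr i) - x (Sum.inr i) * y (Sum.inl i)) = 0) :
    ∃ γ ∈ weylSubgroup k₀ r, Function.Bijective
      ((LinearMap.funLeft k k Sum.inl).comp
        (Submodule.subtype (W.map
          (Matrix.mulVecLin
            (((γ : Matrix (Fin r ⊕ Fin r) (Fin r ⊕ Fin r) k₀)).map (algebraMap k₀ k)))))) :=
  exists_weyl_elt_projection_bijective_general k₀ k r W hrank hiso
end

section
/- Let k0 be a field, k an algebraically closed field containing k0, and r ≥ 1. Let T = (t_{ij}) ∈ Mat_r(k) be a symmetric matrix, and suppose that the evaluation map ev_T : f ↦ f(T), from the k0-subspace of polynomials of total degree ≤ 2 in the polynomial ring k0[X_{ij} : 1 ≤ i ≤ j ≤ r] to k, is injective. Let W_T ⊆ k^{2r} be the k-span of the r columns of the 2r×r block matrix with upper block the identity I_r and lower block T (a Lagrangian subspace for the standard symplectic form given by [[0, I_r],[−I_r, 0]]). Then {A ∈ Mat_{2r}(k0) : A·W_T ⊆ W_T} = k0·I_{2r}. -/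
/-!
Write `A = [[P, Q], [R, S]]` in blocks. Then `A` preserves `W_T` iff `T (P + Q T) = R + S T`. Each
entry of this identity is a relation of degree `≤ 2` over `k₀` among the entries of `T`, so by
injectivity it holds for the generic symmetric matrix, hence for every symmetric matrix `M` over
every commutative `k₀`-algebra. Taking `M = x • 1` over `k₀[x]` separates the degrees and gives
`R = Q = 0` and `S = P`; then `P` commutes with every symmetric matrix over `k₀`, and since
`E_ij = E_ii (E_ij + E_ji)` for `i ≠ j`, `P` commutes with every `E_ij`, so it is scalar.
-/

/-- The `k`-span `W_T` of the `r` columns of the `2r × r` block matrix with upper block the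
identity `I_r` and lower block `T`, inside `k^{2r} = k^r ⊕ k^r`. -/
def lagSpanT (k : Type*) [Field k] (r : ℕ) (T : Matrix (Fin r) (Fin r) k) :
    Submodule k ((Fin r ⊕ Fin r) → k) :=
  Submodule.span k (Set.range fun j : Fin r =>
    (Sum.elim (fun i => if i = j then (1 : k) else 0) (fun i => T i j) :
      (Fin r ⊕ Fin r) → k))

open Matrix MvPolynomial

section LagrangianSpan

variable {k : Type*} [Field k] {r : ℕ} {T : Matrix (Fin r) (Fin r) k}

theorem lagSpanT_eq_range :
    lagSpanT k r T = LinearMap.range (fromRows (1 : Matrix (Fin r) (Fin r) k) T).mulVecLin := by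
  rw [range_mulVecLin, lagSpanT]
  refine congrArg _ (congrArg _ (funext fun j => funext fun i => ?_))
  rcases i with i | i <;> simp [one_apply]

theorem mem_lagSpanT_iff {x : Fin r ⊕ Fin r → k} :
    x ∈ lagSpanT k r T ↔ T *ᵥ (x ∘ Sum.inl) = x ∘ Sum.inr := by
  rw [lagSpanT_eq_range]
  constructor
  · rintro ⟨v, rfl⟩
    simp [fromRows_mulVec]
  · intro h
    refine ⟨x ∘ Sum.inl, ?_⟩
    ext (i | i) <;> simp [fromRows_mulVec, h]

theorem fromBlocks_mulVec_mem_lagSpanT_iff {P Q R S : Matrix (Fin r) (Fin r) k} :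
    (∀ x ∈ lagSpanT k r T, fromBlocks P Q R S *ᵥ x ∈ lagSpanT k r T) ↔
      T * (P + Q * T) = R + S * T := by
  simp only [mem_lagSpanT_iff, fromBlocks_mulVec]
  rw [ext_iff_mulVec]
  constructor
  · intro h v
    have hv : T *ᵥ (Sum.elim v (T *ᵥ v) ∘ Sum.inl) = Sum.elim v (T *ᵥ v) ∘ Sum.inr := by
      simp
    simpa [mul_add, mulVec_add, add_mulVec, mulVec_mulVec] using h _ hv
  · intro h x hx
    rw [← hx]
    simpa [mul_add, mulVec_add, add_mulVec, mulVec_mulVec] using h (x ∘ Sum.inl)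

end LagrangianSpan

section TotalDegree

variable {ι σ R : Type*} [Fintype ι] [CommSemiring R]

theorem totalDegree_mul_apply_le {l : Type*} {M : Matrix l ι (MvPolynomial σ R)}
    {N : Matrix ι l (MvPolynomial σ R)} {a b : ℕ} (hM : ∀ i j, (M i j).totalDegree ≤ a)
    (hN : ∀ i j, (N i j).totalDegree ≤ b) (i j : l) : ((M * N) i j).totalDegree ≤ a + b :=
  totalDegree_finsetSum_le fun m _ =>
    (totalDegree_mul _ _).trans (add_le_add (hM i m) (hN m j))

end TotalDegree

section GenericSymmetricMatrix

abbrev SymmIndex (n : Type*) [LE n] := {q : n × n // q.1 ≤ q.2}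

variable (R : Type*) [CommSemiring R] (n : Type*) [LinearOrder n]

noncomputable def genericSymmMatrix : Matrix n n (MvPolynomial (SymmIndex n) R) :=
  of fun i j => X ⟨(min i j, max i j), min_le_max⟩

variable {R n}

theorem totalDegree_genericSymmMatrix_le (i j : n) :
    (genericSymmMatrix R n i j).totalDegree ≤ 1 :=
  (totalDegree_monomial_le _ _).trans (by simp)

theorem map_aeval_genericSymmMatrix {B : Type*} [CommSemiring B] [Algebra R B]
    {M : Matrix n n B} (hM : M.IsSymm) :
    (genericSymmMatrix R n).map (aeval fun p : SymmIndex n => M p.1.1 p.1.2) = M := by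
  ext i j
  rcases le_total i j with h | h
  · simp [genericSymmMatrix, h]
  · simp [genericSymmMatrix, h, hM.apply i j]

variable [Fintype n]

theorem genericSymmMatrix_relation_of_injOn {k : Type*} [CommSemiring k] [Algebra R k]
    {T : Matrix n n k} (hT : T.IsSymm)
    (hinj : Set.InjOn (aeval fun p : SymmIndex n => T p.1.1 p.1.2)
      {f : MvPolynomial (SymmIndex n) R | f.totalDegree ≤ 2})
    {P Q U S : Matrix n n R}
    (h : T * (P.map (algebraMap R k) + Q.map (algebraMap R k) * T) =
      U.map (algebraMap R k) + S.map (algebraMap R k) * T) :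
    genericSymmMatrix R n * (P.map C + Q.map C * genericSymmMatrix R n) =
      U.map C + S.map C * genericSymmMatrix R n := by
  have hC : ∀ (A : Matrix n n R) i j, ((A.map (C (σ := SymmIndex n))) i j).totalDegree ≤ 0 := by
    simp
  have hCX : ∀ (A : Matrix n n R) i j,
      ((A.map C * genericSymmMatrix R n : Matrix n n _) i j).totalDegree ≤ 1 :=
    fun A => totalDegree_mul_apply_le (hC A) totalDegree_genericSymmMatrix_le
  have hval : (genericSymmMatrix R n * (P.map C + Q.map C * genericSymmMatrix R n)).map
      (aeval fun p : SymmIndex n => T p.1.1 p.1.2) =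
      (U.map C + S.map C * genericSymmMatrix R n).map
      (aeval fun p : SymmIndex n => T p.1.1 p.1.2) := by
    simp only [← AlgHom.mapMatrix_apply, map_mul, map_add]
    simpa only [AlgHom.mapMatrix_apply, map_aeval_genericSymmMatrix hT, map_map,
      Function.comp_def, aeval_C] using h
  ext1 i j
  refine hinj ?_ ?_ (congrFun₂ hval i j)
  · exact totalDegree_mul_apply_le totalDegree_genericSymmMatrix_le (fun i j =>
      (totalDegree_add _ _).trans (max_le ((hC P i j).trans zero_le_one) (hCX Q i j))) i j
  · exact (totalDegree_add _ _).trans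
      (max_le ((hC U i j).trans zero_le_two) ((hCX S i j).trans one_le_two))

theorem relation_of_genericSymmMatrix_relation {P Q U S : Matrix n n R}
    (h : genericSymmMatrix R n * (P.map C + Q.map C * genericSymmMatrix R n) =
      U.map C + S.map C * genericSymmMatrix R n)
    {B : Type*} [CommSemiring B] [Algebra R B] {M : Matrix n n B} (hM : M.IsSymm) :
    M * (P.map (algebraMap R B) + Q.map (algebraMap R B) * M) =
      U.map (algebraMap R B) + S.map (algebraMap R B) * M := by
  have := congrArg (aeval fun p : SymmIndex n => M p.1.1 p.1.2).mapMatrix h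
  simpa only [map_mul, map_add, AlgHom.mapMatrix_apply, map_aeval_genericSymmMatrix hM, map_map,
      Function.comp_def, aeval_C] using this

theorem eq_of_genericSymmMatrix_relation {P Q U S : Matrix n n R}
    (h : genericSymmMatrix R n * (P.map C + Q.map C * genericSymmMatrix R n) =
      U.map C + S.map C * genericSymmMatrix R n) :
    U = 0 ∧ Q = 0 ∧ S = P := by
  have hXsymm : ((Polynomial.X : Polynomial R) • (1 : Matrix n n (Polynomial R))).IsSymm :=
    isSymm_one.smul _
  have hX := relation_of_genericSymmMatrix_relation h hXsymm
  have entry : ∀ i j,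
      Polynomial.X * (Polynomial.C (P i j) + Polynomial.X * Polynomial.C (Q i j)) =
        Polynomial.C (U i j) + Polynomial.X * Polynomial.C (S i j) := by
    intro i j
    simpa [smul_mul, mul_smul] using congrFun₂ hX i j
  refine ⟨ext fun i j => ?_, ext fun i j => ?_, ext fun i j => ?_⟩
  · simpa [eq_comm] using congrArg (Polynomial.coeff · 0) (entry i j)
  · simpa [mul_add, ← mul_assoc, ← pow_two] using congrArg (Polynomial.coeff · 2) (entry i j)
  · simpa [mul_add, eq_comm] using congrArg (Polynomial.coeff · 1) (entry i j)

end GenericSymmetricMatrix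

theorem mem_range_scalar_of_commute_isSymm {n α : Type*} [Fintype n] [DecidableEq n]
    [Semiring α] {M : Matrix n n α} (hM : ∀ N : Matrix n n α, N.IsSymm → Commute N M) :
    M ∈ Set.range (scalar n) := by
  refine mem_range_scalar_of_commute_single fun i j hij => ?_
  have hsingle : single i j (1 : α) = single i i 1 * (single i j 1 + single j i 1) := by
    simp [mul_add, hij]
  show Commute _ M
  rw [hsingle]
  refine (hM _ ?_).mul_left (hM _ ?_) <;> simp [IsSymm, transpose_single, add_comm]

theorem symplectic_stabilizer_eq_scalars_of_degree_two_injective_general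
    (k₀ k : Type*) [Field k₀] [Field k] [Algebra k₀ k]
    (r : ℕ)
    (T : Matrix (Fin r) (Fin r) k) (hsymm : T.IsSymm)
    (hinj : Set.InjOn
      (MvPolynomial.aeval fun p : {q : Fin r × Fin r // q.1 ≤ q.2} => T p.1.1 p.1.2)
      {f : MvPolynomial {q : Fin r × Fin r // q.1 ≤ q.2} k₀ | f.totalDegree ≤ 2}) :
    {A : Matrix (Fin r ⊕ Fin r) (Fin r ⊕ Fin r) k₀ |
        ∀ x ∈ lagSpanT k r T, (A.map (algebraMap k₀ k)).mulVec x ∈ lagSpanT k r T} =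
      {A : Matrix (Fin r ⊕ Fin r) (Fin r ⊕ Fin r) k₀ |
        ∃ a : k₀, A = a • (1 : Matrix (Fin r ⊕ Fin r) (Fin r ⊕ Fin r) k₀)} := by
  ext A
  obtain ⟨P, Q, R, S, rfl⟩ : ∃ P Q R S, A = fromBlocks P Q R S :=
    ⟨_, _, _, _, (fromBlocks_toBlocks A).symm⟩
  simp only [Set.mem_ofPred_eq, fromBlocks_map, fromBlocks_mulVec_mem_lagSpanT_iff,
    ← fromBlocks_one, fromBlocks_smul, smul_zero, fromBlocks_inj]
  constructor
  · intro h
    have hgen := genericSymmMatrix_relation_of_injOn hsymm hinj h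
    obtain ⟨rfl, rfl, rfl⟩ := eq_of_genericSymmMatrix_relation hgen
    obtain ⟨a, rfl⟩ := mem_range_scalar_of_commute_isSymm fun N hN =>
      (by simpa using relation_of_genericSymmMatrix_relation hgen (B := k₀) hN : N * _ = _ * N)
    exact ⟨a, by simp [smul_one_eq_diagonal]⟩
  · rintro ⟨a, rfl, rfl, rfl, rfl⟩
    simp only [smul_one_eq_diagonal, map_zero, diagonal_map, Matrix.map_zero, zero_mul, add_zero,
      zero_add]
    exact (scalar_commute _ (Commute.all _) T).symm

/-- Let `k₀` be a field, `k` an algebraically closed field containing `k₀`, and `r ≥ 1`.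
Let `T ∈ Mat_r(k)` be symmetric, and suppose that evaluation at `T` is injective on the
`k₀`-subspace of polynomials of total degree `≤ 2` in `k₀[X_{ij} : 1 ≤ i ≤ j ≤ r]`.  Let
`W_T ⊆ k^{2r}` be the `k`-span of the columns of the block matrix `[I_r; T]` (a Lagrangian
subspace for the standard symplectic form `[[0, I_r], [−I_r, 0]]`).  Then the only matrices
with entries in `k₀` preserving `W_T` are the scalar matrices. -/
theorem symplectic_stabilizer_eq_scalars_of_degree_two_injective
    (k₀ k : Type*) [Field k₀] [Field k] [IsAlgClosed k] [Algebra k₀ k]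
    (r : ℕ) (hr : 1 ≤ r)
    (T : Matrix (Fin r) (Fin r) k) (hsymm : T.IsSymm)
    (hinj : Set.InjOn
      (MvPolynomial.aeval fun p : {q : Fin r × Fin r // q.1 ≤ q.2} => T p.1.1 p.1.2)
      {f : MvPolynomial {q : Fin r × Fin r // q.1 ≤ q.2} k₀ | f.totalDegree ≤ 2}) :
    {A : Matrix (Fin r ⊕ Fin r) (Fin r ⊕ Fin r) k₀ |
        ∀ x ∈ lagSpanT k r T, (A.map (algebraMap k₀ k)).mulVec x ∈ lagSpanT k r T} =
      {A : Matrix (Fin r ⊕ Fin r) (Fin r ⊕ Fin r) k₀ |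
        ∃ a : k₀, A = a • (1 : Matrix (Fin r ⊕ Fin r) (Fin r ⊕ Fin r) k₀)} :=
  symplectic_stabilizer_eq_scalars_of_degree_two_injective_general k₀ k r T hsymm hinj
end

section
/- Let k0 be a field and k an algebraically closed field such that the extension k/k0 is infinite, and let r ≥ 1. Equip k_0^{2r} with the standard symplectic form ψ0 given by the matrix [[0, I_r],[−I_r, 0]]. Then there exists a maximal isotropic (Lagrangian) k-subspace W ⊆ k^{2r}, i.e., dim_k W = r and the k-bilinear extension of ψ0 vanishes identically on W × W, such that {A ∈ Mat_{2r}(k0) : A·W ⊆ W} = k0·I_{2r}. -/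
/-!
Let `T` be the symmetric matrix with entries `T i j = t ^ 3 ^ ν s(i, j)`, where `ν` numbers the
`N` unordered pairs `s(i, j)` injectively, and let `W` be the graph of `T`, which is Lagrangian
since `T` is symmetric. A block matrix `[[a, b], [c, d]]` preserves `W` iff
`c + d T = T (a + b T)`.

Because `k` is perfect and `k / k₀` is infinite, `t` can be chosen of degree larger than any given
bound over `k₀`: a separable extension with bounded degrees is finite by the primitive element
theorem, and a perfect field that is purely inseparable of bounded exponent over a subfield
coincides with it. With such a `t` the identity, whose entries have degree at most `2 * 3 ^ N`,
holds with `t` replaced by the variable `X`. Its entries only involve the exponents `0`, `3 ^ a`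
and `3 ^ a + 3 ^ b`, and the last determines `{a, b}` because its base-`3` logarithm is
`max a b`, so comparing coefficients forces `b = c = 0` and `a = d` scalar.
-/

open Polynomial

section FieldTheory

variable {F E : Type*} [Field F] [Field E] [Algebra F E]

open IntermediateField in
theorem exists_lt_natDegree_minpoly_of_isSeparable [Algebra.IsSeparable F E]
    (h : ¬ FiniteDimensional F E) (D : ℕ) : ∃ x : E, D < (minpoly F x).natDegree := by
  obtain ⟨L, _, hD⟩ := exists_lt_finrank_of_infinite_dimensional h D
  obtain ⟨α, hα⟩ := Field.exists_primitive_element F L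
  refine ⟨algebraMap L E α, ?_⟩
  rwa [minpoly.algebraMap_eq (algebraMap L E).injective,
    (Field.primitive_element_iff_minpoly_natDegree_eq F α).1 hα]

open IsPurelyInseparable in
theorem IsPurelyInseparable.surjective_algebraMap_of_natDegree_minpoly_le [PerfectField E]
    [IsPurelyInseparable F E] {D : ℕ} (hD : ∀ x : E, (minpoly F x).natDegree ≤ D) :
    Function.Surjective (algebraMap F E) := by
  obtain ⟨q, hq⟩ := ExpChar.exists F
  cases hq with
  | zero => exact surjective_algebraMap_of_isSeparable F E
  | prime hq =>
    have : ExpChar F q := .prime hq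
    have : ExpChar E q := expChar_of_injective_algebraMap (algebraMap F E).injective q
    intro y
    obtain ⟨x, rfl⟩ := (bijective_iterateFrobenius E q D).2 y
    have hle : elemExponent F x ≤ D :=
      (Nat.lt_pow_self hq.one_lt).le.trans (minpoly_natDegree_eq' F q x ▸ hD x)
    obtain ⟨c, hc⟩ := elemExponent_def' F q x
    refine ⟨c ^ q ^ (D - elemExponent F x), ?_⟩
    rw [map_pow, hc, ← pow_mul, ← pow_add, Nat.add_sub_cancel' hle, iterateFrobenius_def]

theorem FiniteDimensional.of_natDegree_minpoly_le [PerfectField E] [Algebra.IsAlgebraic F E]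
    {D : ℕ} (hD : ∀ x : E, (minpoly F x).natDegree ≤ D) : FiniteDimensional F E := by
  let L := separableClosure F E
  have : FiniteDimensional F L := by
    by_contra h
    obtain ⟨x, hx⟩ := exists_lt_natDegree_minpoly_of_isSeparable h D
    rw [← minpoly.algebraMap_eq (algebraMap L E).injective] at hx
    exact (hD _).not_gt hx
  have hsurj : Function.Surjective (algebraMap L E) :=
    IsPurelyInseparable.surjective_algebraMap_of_natDegree_minpoly_le fun x =>
      ((natDegree_le_of_dvd (minpoly.dvd_map_of_isScalarTower F L x)
        (map_ne_zero (minpoly.ne_zero (Algebra.IsIntegral.isIntegral x)))).trans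
          natDegree_map_le).trans (hD x)
  have : Module.Finite L E := .of_surjective (Algebra.linearMap L E) hsurj
  exact Module.Finite.trans L E

theorem exists_forall_eq_zero_of_aeval_eq_zero_of_natDegree_le [PerfectField E]
    (h : ¬ FiniteDimensional F E) (D : ℕ) :
    ∃ t : E, ∀ p : F[X], p.natDegree ≤ D → aeval t p = 0 → p = 0 := by
  by_cases halg : Algebra.IsAlgebraic F E
  · obtain ⟨t, ht⟩ : ∃ t : E, D < (minpoly F t).natDegree := by
      by_contra! hD
      exact h (.of_natDegree_minpoly_le hD)
    refine ⟨t, fun p hp h0 => by_contra fun hne => ?_⟩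
    exact (ht.trans_le ((natDegree_le_natDegree (minpoly.degree_le_of_ne_zero F t hne h0)).trans
      hp)).false
  · obtain ⟨t, ht⟩ : ∃ t : E, Transcendental F t := by
      simpa [Algebra.isAlgebraic_def, Transcendental] using halg
    exact ⟨t, fun p _ h0 => by_contra fun hne => ht ⟨p, hne, h0⟩⟩

end FieldTheory

theorem Nat.log_pow_add_pow_s16 {q : ℕ} (hq : 2 < q) (a b : ℕ) :
    Nat.log q (q ^ a + q ^ b) = max a b := by
  wlog hab : a ≤ b generalizing a b
  · rw [add_comm, max_comm]
    exact this b a (by omega)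
  rw [max_eq_right hab]
  refine Nat.log_eq_of_pow_le_of_lt_pow (Nat.le_add_left _ _) ?_
  calc q ^ a + q ^ b ≤ 2 * q ^ b := by
        rw [two_mul]; exact Nat.add_le_add_right (Nat.pow_le_pow_right (by omega) hab) _
    _ < q ^ (b + 1) := by
        rw [pow_succ, mul_comm]; exact Nat.mul_lt_mul_of_pos_left hq (by positivity)

theorem Nat.pow_add_pow_ne_pow_s16 {q : ℕ} (hq : 2 < q) (a b c : ℕ) : q ^ a + q ^ b ≠ q ^ c := by
  intro h
  have hc := Nat.log_pow_add_pow_s16 hq a b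
  rw [h, Nat.log_pow (by omega)] at hc
  rcases max_choice a b with hm | hm <;> rw [hm] at hc <;> subst hc <;> simp at h <;> omega

theorem Nat.pow_add_pow_eq_pow_add_pow_iff {q : ℕ} (hq : 2 < q) {a b c d : ℕ} :
    q ^ a + q ^ b = q ^ c + q ^ d ↔ (a = c ∧ b = d) ∨ (a = d ∧ b = c) := by
  refine ⟨fun h => ?_, by rintro (⟨rfl, rfl⟩ | ⟨rfl, rfl⟩) <;> simp [add_comm]⟩
  have hmax : max a b = max c d := by
    rw [← Nat.log_pow_add_pow_s16 hq, h, Nat.log_pow_add_pow_s16 hq]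
  have hsplit : ∀ x y : ℕ, q ^ x + q ^ y = q ^ min x y + q ^ max x y := fun x y => by
    rcases le_total x y with hxy | hxy <;> simp [hxy, add_comm]
  have hmin : min a b = min c d := by
    apply Nat.pow_right_injective (show 2 ≤ q by omega)
    have := hsplit a b ▸ hsplit c d ▸ h
    rw [hmax] at this
    exact Nat.add_right_cancel this
  omega

namespace Matrix

variable {R : Type*} [CommRing R] {n : Type*} [Fintype n]

def graph (T : Matrix n n R) : Submodule R (n ⊕ n → R) :=
  (LinearMap.graph T.mulVecLin).comap (LinearEquiv.sumArrowLequivProdArrow n n R R).toLinearMap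

theorem mem_graph_iff {T : Matrix n n R} {x : n ⊕ n → R} :
    x ∈ T.graph ↔ x ∘ Sum.inr = T *ᵥ (x ∘ Sum.inl) :=
  Iff.rfl

theorem finrank_graph [StrongRankCondition R] (T : Matrix n n R) :
    Module.finrank R T.graph = Fintype.card n := by
  rw [graph, Submodule.comap_equiv_eq_map_symm, LinearEquiv.finrank_map_eq,
    LinearMap.graph_eq_range_prod,
    LinearMap.finrank_range_of_inj fun u v h => congrArg Prod.fst h,
    Module.finrank_fintype_fun_eq_card]

theorem graph_isotropic {T : Matrix n n R} (hT : Tᵀ = T) {x y : n ⊕ n → R} (hx : x ∈ T.graph)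
    (hy : y ∈ T.graph) :
    ∑ i, (x (Sum.inl i) * y (Sum.inr i) - x (Sum.inr i) * y (Sum.inl i)) = 0 := by
  have hx' : ∀ i, x (Sum.inr i) = (T *ᵥ (x ∘ Sum.inl)) i := congrFun (mem_graph_iff.1 hx)
  have hy' : ∀ i, y (Sum.inr i) = (T *ᵥ (y ∘ Sum.inl)) i := congrFun (mem_graph_iff.1 hy)
  simp only [hx', hy', Finset.sum_sub_distrib]
  change (x ∘ Sum.inl) ⬝ᵥ (T *ᵥ (y ∘ Sum.inl)) - (T *ᵥ (x ∘ Sum.inl)) ⬝ᵥ (y ∘ Sum.inl) = 0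
  rw [dotProduct_mulVec, ← mulVec_transpose, hT, sub_self]

theorem fromBlocks_mulVec_mem_graph_iff {T a b c d : Matrix n n R} :
    (∀ x ∈ T.graph, fromBlocks a b c d *ᵥ x ∈ T.graph) ↔ c + d * T = T * (a + b * T) := by
  simp only [ext_iff_mulVec, mem_graph_iff, fromBlocks_mulVec, Sum.elim_comp_inl,
    Sum.elim_comp_inr, add_mulVec, mulVec_add, ← mulVec_mulVec]
  refine ⟨fun h v => h (Sum.elim v (T *ᵥ v)) rfl, fun h x hx => ?_⟩
  rw [hx]
  exact h _

end Matrix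

section MonomialMatrix

open Matrix

variable {R : Type*} [CommSemiring R] {n : Type*} [Fintype n]

noncomputable def monomialMatrix (ν : Sym2 n → ℕ) : Matrix n n R[X] :=
  of fun i j => X ^ 3 ^ ν s(i, j)

variable (ν : Sym2 n → ℕ)

omit [Fintype n] in
theorem transpose_monomialMatrix :
    (monomialMatrix ν : Matrix n n R[X])ᵀ = monomialMatrix ν := by
  ext i j
  simp [monomialMatrix, Sym2.eq_swap]

theorem coeff_map_C_mul_monomialMatrix (d : Matrix n n R) (i l : n) (w : ℕ) :
    ((d.map C * monomialMatrix ν : Matrix n n R[X]) i l).coeff w =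
      ∑ m, if w = 3 ^ ν s(m, l) then d i m else 0 := by
  simp [monomialMatrix, mul_apply, finsetSum_coeff]

theorem coeff_monomialMatrix_mul_map_C (a : Matrix n n R) (i l : n) (w : ℕ) :
    ((monomialMatrix ν * a.map C : Matrix n n R[X]) i l).coeff w =
      ∑ j, if w = 3 ^ ν s(i, j) then a j l else 0 := by
  simp [monomialMatrix, mul_apply, finsetSum_coeff]

theorem coeff_monomialMatrix_mul_map_C_mul_monomialMatrix (b : Matrix n n R) (i l : n)
    (w : ℕ) :
    ((monomialMatrix ν * (b.map C * monomialMatrix ν) : Matrix n n R[X]) i l).coeff w =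
      ∑ j, ∑ m, if w = 3 ^ ν s(i, j) + 3 ^ ν s(m, l) then b j m else 0 := by
  simp only [monomialMatrix, mul_apply, of_apply, map_apply, Finset.mul_sum, finsetSum_coeff,
    mul_left_comm (X ^ _ : R[X]) (C _), ← pow_add, coeff_C_mul_X_pow]

omit [Fintype n] in
theorem exists_fromBlocks_zero_zero_eq_smul_one [DecidableEq n] {a d : Matrix n n R}
    (ha : ∀ j l, j ≠ l → a j l = 0) (hd : ∀ i m, i ≠ m → d i m = 0)
    (had : ∀ i l, d i i = a l l) :
    ∃ μ : R, fromBlocks a 0 0 d = μ • 1 := by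
  rcases isEmpty_or_nonempty n with hn | ⟨⟨i₀⟩⟩
  · exact ⟨0, Subsingleton.elim _ _⟩
  set μ := d i₀ i₀ with hμ
  refine ⟨μ, ?_⟩
  have ha' : a = μ • 1 := by
    ext j l
    rcases eq_or_ne j l with rfl | hjl
    · simp [hμ, had i₀ j]
    · simp [ha j l hjl, hjl]
  have hd' : d = μ • 1 := by
    ext i m
    rcases eq_or_ne i m with rfl | him
    · simp [hμ, had i i₀, had i₀ i₀]
    · simp [hd i m him, him]
  rw [ha', hd', ← fromBlocks_one, fromBlocks_smul, smul_zero]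

theorem exists_fromBlocks_eq_smul_one_of_mul_monomialMatrix [DecidableEq n]
    (hν : Function.Injective ν) {a b c d : Matrix n n R}
    (h : c.map C + d.map C * monomialMatrix ν =
      monomialMatrix ν * (a.map C + b.map C * monomialMatrix ν)) :
    ∃ μ : R, fromBlocks a b c d = μ • 1 := by
  have hcoeff : ∀ i l w,
      ((if w = 0 then c i l else 0) + ∑ m, if w = 3 ^ ν s(m, l) then d i m else 0) =
        (∑ j, if w = 3 ^ ν s(i, j) then a j l else 0) +
          ∑ j, ∑ m, if w = 3 ^ ν s(i, j) + 3 ^ ν s(m, l) then b j m else 0 := fun i l w => by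
    simpa only [mul_add, Matrix.add_apply, coeff_add, coeff_map_C_mul_monomialMatrix,
      coeff_monomialMatrix_mul_map_C, coeff_monomialMatrix_mul_map_C_mul_monomialMatrix,
      map_apply, coeff_C] using congrArg (fun M : Matrix n n R[X] => (M i l).coeff w) h
  have h3 : (2 : ℕ) < 3 := by norm_num
  have hsum_ne := Nat.pow_add_pow_ne_pow_s16 h3
  have hsum_ne' : ∀ a b c : ℕ, 3 ^ c ≠ 3 ^ a + 3 ^ b := fun a b c => (hsum_ne a b c).symm
  have hc : c = 0 := by
    ext i l
    simpa [eq_comm (a := 0), hsum_ne] using hcoeff i l 0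
  have he : ∀ x y, 3 ^ ν x = 3 ^ ν y ↔ x = y := fun x y =>
    (Nat.pow_right_injective h3.le).eq_iff.trans hν.eq_iff
  have hoff_a : ∀ j l, j ≠ l → a j l = 0 := fun j l hjl => by
    simpa [he, Sym2.eq_iff, hjl, hsum_ne'] using (hcoeff j l (3 ^ ν s(j, j))).symm
  have hoff_d : ∀ i m, i ≠ m → d i m = 0 := fun i m him => by
    have := hcoeff i m (3 ^ ν s(m, m))
    simp only [he, Sym2.congr_left] at this
    simpa [Sym2.eq_iff, him.symm, hsum_ne'] using this
  have hdiag : ∀ i l, d i i = a l l := fun i l => by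
    have := hcoeff i l (3 ^ ν s(i, l))
    simp only [he, Sym2.congr_left, Sym2.congr_right] at this
    simpa [hsum_ne'] using this
  have hb : b = 0 := by
    ext j m
    have := hcoeff m j (3 ^ ν s(m, j) + 3 ^ ν s(m, j))
    simp only [Nat.pow_add_pow_eq_pow_add_pow_iff h3, hν.eq_iff, Sym2.congr_left,
      Sym2.congr_right] at this
    simpa [hsum_ne, and_comm, ite_and] using this.symm
  exact hc ▸ hb ▸ exists_fromBlocks_zero_zero_eq_smul_one hoff_a hoff_d hdiag

theorem natDegree_map_C_add_map_C_mul_monomialMatrix_le {ν : Sym2 n → ℕ} {N : ℕ}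
    (hν : ∀ x, ν x < N) (c d : Matrix n n R) (i l : n) :
    ((c.map C + d.map C * monomialMatrix ν : Matrix n n R[X]) i l).natDegree ≤ 2 * 3 ^ N := by
  refine natDegree_le_iff_coeff_eq_zero.2 fun w hw => ?_
  have hne : ∀ x, w ≠ 3 ^ ν x := fun x => by
    have := Nat.pow_lt_pow_right (by norm_num : 1 < 3) (hν x); omega
  simp [coeff_map_C_mul_monomialMatrix, coeff_C, hne, show w ≠ 0 by omega]

theorem natDegree_monomialMatrix_mul_le {ν : Sym2 n → ℕ} {N : ℕ}
    (hν : ∀ x, ν x < N) (a b : Matrix n n R) (i l : n) :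
    ((monomialMatrix ν * (a.map C + b.map C * monomialMatrix ν) : Matrix n n R[X]) i l).natDegree ≤
      2 * 3 ^ N := by
  refine natDegree_le_iff_coeff_eq_zero.2 fun w hw => ?_
  have hlt : ∀ x, 3 ^ ν x < 3 ^ N := fun x => Nat.pow_lt_pow_right (by norm_num) (hν x)
  have hne : ∀ x, w ≠ 3 ^ ν x := fun x => by have := hlt x; omega
  have hne' : ∀ x y, w ≠ 3 ^ ν x + 3 ^ ν y := fun x y => by have := hlt x; have := hlt y; omega
  simp [mul_add, coeff_monomialMatrix_mul_map_C, coeff_monomialMatrix_mul_map_C_mul_monomialMatrix,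
    hne, hne']

end MonomialMatrix

section Specialization

open Matrix

variable {K S : Type*} [CommRing K] [CommRing S] [Algebra K S] {m n : Type*}

theorem Matrix.map_map_C_aeval (c : Matrix m n K) (t : S) :
    (c.map C).map (aeval t) = c.map (algebraMap K S) := by
  ext
  simp

theorem Matrix.eq_of_map_aeval_eq {t : S} {D : ℕ}
    (ht : ∀ p : K[X], p.natDegree ≤ D → aeval t p = 0 → p = 0) {P Q : Matrix m n K[X]}
    (hP : ∀ i j, (P i j).natDegree ≤ D) (hQ : ∀ i j, (Q i j).natDegree ≤ D)
    (h : P.map (aeval t) = Q.map (aeval t)) : P = Q := by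
  refine Matrix.ext fun i j => sub_eq_zero.1 <|
    ht _ ((natDegree_sub_le _ _).trans (max_le (hP i j) (hQ i j))) ?_
  rw [map_sub, sub_eq_zero]
  exact congrFun (congrFun h i) j

theorem exists_fromBlocks_eq_smul_one_of_map_aeval [Fintype n] [DecidableEq n]
    {ν : Sym2 n → ℕ} {N : ℕ} (hν : Function.Injective ν) (hνN : ∀ x, ν x < N) {t : S}
    (ht : ∀ p : K[X], p.natDegree ≤ 2 * 3 ^ N → aeval t p = 0 → p = 0) {a b c d : Matrix n n K}
    (h : let T := (monomialMatrix ν).map (aeval (R := K) t)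
      c.map (algebraMap K S) + d.map (algebraMap K S) * T =
        T * (a.map (algebraMap K S) + b.map (algebraMap K S) * T)) :
    ∃ μ : K, fromBlocks a b c d = μ • 1 :=
  exists_fromBlocks_eq_smul_one_of_mul_monomialMatrix ν hν <|
    eq_of_map_aeval_eq ht (natDegree_map_C_add_map_C_mul_monomialMatrix_le hνN c d)
      (natDegree_monomialMatrix_mul_le hνN a b) <| by
        rw [← AlgHom.mapMatrix_apply, ← AlgHom.mapMatrix_apply]
        simpa only [map_add, map_mul, AlgHom.mapMatrix_apply, map_map_C_aeval] using h

end Specialization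

open Matrix in
theorem exists_lagrangian_with_scalar_stabilizer_general
    (k₀ k : Type*) [Field k₀] [Field k] [IsAlgClosed k] [Algebra k₀ k]
    (hinf : ¬ FiniteDimensional k₀ k) (r : ℕ) :
    ∃ W : Submodule k ((Fin r ⊕ Fin r) → k),
      Module.finrank k W = r ∧
      (∀ x ∈ W, ∀ y ∈ W,
        ∑ i : Fin r, (x (Sum.inl i) * y (Sum.inr i) - x (Sum.inr i) * y (Sum.inl i)) = 0) ∧
      {A : Matrix (Fin r ⊕ Fin r) (Fin r ⊕ Fin r) k₀ |
          ∀ x ∈ W, (A.map (algebraMap k₀ k)).mulVec x ∈ W} =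
        {A : Matrix (Fin r ⊕ Fin r) (Fin r ⊕ Fin r) k₀ |
          ∃ a : k₀, A = a • (1 : Matrix (Fin r ⊕ Fin r) (Fin r ⊕ Fin r) k₀)} := by
  let ν : Sym2 (Fin r) → ℕ := fun x => Fintype.equivFin _ x
  have hν_inj : Function.Injective ν := Fin.val_injective.comp (Fintype.equivFin _).injective
  have hν_lt : ∀ x, ν x < Fintype.card (Sym2 (Fin r)) := fun x => (Fintype.equivFin _ x).isLt
  obtain ⟨t, ht⟩ := exists_forall_eq_zero_of_aeval_eq_zero_of_natDegree_le hinf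
    (2 * 3 ^ Fintype.card (Sym2 (Fin r)))
  let M : Matrix (Fin r) (Fin r) k₀[X] := monomialMatrix ν
  let T := M.map (aeval t)
  refine ⟨T.graph, by simp [finrank_graph], fun x hx y hy => graph_isotropic ?_ hx hy,
    Set.ext fun A => ⟨fun hA => ?_, ?_⟩⟩
  · rw [← transpose_map, transpose_monomialMatrix]
  · rw [Set.mem_ofPred_eq, ← fromBlocks_toBlocks A, fromBlocks_map,
      fromBlocks_mulVec_mem_graph_iff] at hA
    obtain ⟨μ, hμ⟩ := exists_fromBlocks_eq_smul_one_of_map_aeval hν_inj hν_lt ht hA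
    exact ⟨μ, by rw [← fromBlocks_toBlocks A, hμ]⟩
  · rintro ⟨μ, rfl⟩ x hx
    rw [Matrix.map_smul' _ _ _ (map_mul _), Matrix.map_one _ (map_zero _) (map_one _), smul_mulVec,
      one_mulVec]
    exact T.graph.smul_mem _ hx

/-- Let `k₀` be a field and `k` an algebraically closed field such that the extension
`k/k₀` is infinite, and let `r ≥ 1`.  Equip `k₀^{2r}` with the standard symplectic form
given by `[[0, I_r], [−I_r, 0]]`.  Then there exists a maximal isotropic (Lagrangian)
`k`-subspace `W ⊆ k^{2r}` such that the only matrices with entries in `k₀` preserving `W`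
are the scalar matrices. -/
theorem exists_lagrangian_with_scalar_stabilizer
    (k₀ k : Type*) [Field k₀] [Field k] [IsAlgClosed k] [Algebra k₀ k]
    (hinf : ¬ FiniteDimensional k₀ k) (r : ℕ) (hr : 1 ≤ r) :
    ∃ W : Submodule k ((Fin r ⊕ Fin r) → k),
      Module.finrank k W = r ∧
      (∀ x ∈ W, ∀ y ∈ W,
        ∑ i : Fin r, (x (Sum.inl i) * y (Sum.inr i) - x (Sum.inr i) * y (Sum.inl i)) = 0) ∧
      {A : Matrix (Fin r ⊕ Fin r) (Fin r ⊕ Fin r) k₀ |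
          ∀ x ∈ W, (A.map (algebraMap k₀ k)).mulVec x ∈ W} =
        {A : Matrix (Fin r ⊕ Fin r) (Fin r ⊕ Fin r) k₀ |
          ∃ a : k₀, A = a • (1 : Matrix (Fin r ⊕ Fin r) (Fin r ⊕ Fin r) k₀)} :=
  exists_lagrangian_with_scalar_stabilizer_general k₀ k hinf r
end
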